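/- arXiv:2211.15602 — 3 statements merged into one kernel-verified Lean document; each statement's English description precedes it below -/
import Mathlib

section
/- For all integers n ≥ 0 and k ≥ 2, every digraph with n vertices, no multi-edges (self-loops allowed), and every vertex of outdegree at most k has at most ((k+1)!)^(n/(k+1)) directed cycles; that is, M_k(n) ≤ ((k+1)!)^(n/(k+1)). -/
open scoped Classical
open Finset

/-- Number of directed cycles in a finite directed multigraph on `Fin n`
specified by the edge-multiplicity function `G`: self-loops are cycles of
length 1, cycles of length `≥ 2` correspond to cyclic permutations, parallel
edges give distinct cycles, and cycles are counted up to cyclic rotation. -/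
noncomputable def cycleCount (n : ℕ) (G : Fin n → Fin n → ℕ) : ℕ :=
  (∑ v, G v v) +
  ∑ σ : Equiv.Perm (Fin n), if σ.IsCycle then ∏ v ∈ σ.support, G v (σ v) else 0

/-- Number of path-cycle subgraphs of a finite directed multigraph with
multiplicity function `G`: a path-cycle subgraph is given by a nonempty
vertex set `s` together with a successor map `f` on `s` (extended by the
identity off `s`) whose functional digraph on `s` is weakly connected and
has at most one source (vertex of indegree zero); parallel edges give
distinct path-cycles. -/
noncomputable def pathCycleCount {V : Type*} [Fintype V] [DecidableEq V]
    (G : V → V → ℕ) : ℕ :=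
  ∑ s : Finset V, ∑ f : V → V,
    if s.Nonempty ∧ (∀ v, v ∉ s → f v = v) ∧ (∀ v ∈ s, f v ∈ s) ∧
        (∀ u ∈ s, ∀ v ∈ s,
          Relation.ReflTransGen (fun a b => (a ∈ s ∧ f a = b) ∨ (b ∈ s ∧ f b = a)) u v) ∧
        (s.filter fun v => ∀ u ∈ s, f u ≠ v).card ≤ 1
    then ∏ v ∈ s, G v (f v) else 0

/-- `α(k) = (k - 1 + √((k-1)² + 4)) / 2`. -/
noncomputable def alphaK (k : ℕ) : ℝ :=
  ((k : ℝ) - 1 + Real.sqrt (((k : ℝ) - 1) ^ 2 + 4)) / 2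

/-- Multiplicity function of the digraph `G_{n,k}`: on vertices `Fin n`,
edges `(i, i+1 mod n)` have multiplicity `k - 1` and edges `(i, i+2 mod n)`
have multiplicity `1`. -/
def GnkMult (n k : ℕ) : Fin n → Fin n → ℕ := fun i j =>
  if (j.val + n - i.val) % n = 1 then k - 1
  else if (j.val + n - i.val) % n = 2 then 1
  else 0

/-- Multiplicity function of the digraph `G'_{n,k}`: on vertices `Fin n`,
edges `(i, i+1 mod n)` have multiplicity `1` and edges `(i, i+2 mod n)`
have multiplicity `k - 1`. -/
def Gnk'Mult (n k : ℕ) : Fin n → Fin n → ℕ := fun i j =>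
  if (j.val + n - i.val) % n = 1 then 1
  else if (j.val + n - i.val) % n = 2 then k - 1
  else 0

/-- Edge relation of the simple digraph `G_m`: `(i, j)` is an edge whenever
`j - i ≡ 1 (mod m)` or `j - i ≡ 2 (mod m)`. -/
def GmRel (m : ℕ) : Fin m → Fin m → Prop := fun i j =>
  (j.val + m - i.val) % m = 1 ∨ (j.val + m - i.val) % m = 2

/-- The sequence `S_m` with `S_0 = 1`, `S_1 = k - 1`,
`S_m = (k-1) S_{m-1} + S_{m-2}`. -/
def Sseq (k : ℕ) : ℕ → ℕ
  | 0 => 1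
  | 1 => k - 1
  | (m + 2) => (k - 1) * Sseq k (m + 1) + Sseq k m

/-- `F_k(n)`: the maximum number of directed cycles over all digraphs on `n`
vertices with every outdegree exactly `k` in which every multi-edge between
distinct vertices has multiplicity at most `k - 1`. -/
noncomputable def Fk (k n : ℕ) : ℕ :=
  sSup {c : ℕ | ∃ G : Fin n → Fin n → ℕ,
    (∀ v, (∑ u, G v u) = k) ∧ (∀ u v : Fin n, u ≠ v → G u v ≤ k - 1) ∧
    c = cycleCount n G}

/-- Weak connectivity (same connected component) in a directed multigraph. -/
def MConn {n : ℕ} (G : Fin n → Fin n → ℕ) : Fin n → Fin n → Prop :=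
  Relation.ReflTransGen (fun a b => 0 < G a b ∨ 0 < G b a)

/-- A deterministic Markov decision problem with state space `S`, action
space `A` (all actions available at every state), deterministic transition
function `T`, reward function `R` and discount factor `gamma ∈ [0, 1)`. -/
structure DMDP (S A : Type*) where
  T : S → A → S
  R : S → A → ℝ
  gamma : ℝ
  gamma_nonneg : 0 ≤ gamma
  gamma_lt_one : gamma < 1

namespace DMDP

variable {S A : Type*}

/-- The trajectory of states obtained by following policy `π` from `s`. -/
def traj (M : DMDP S A) (π : S → A) (s : S) (t : ℕ) : S :=
  (fun x => M.T x (π x))^[t] s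

/-- The value function `V^π(s) = Σ_t γ^t R(s_t, π(s_t))`. -/
noncomputable def V (M : DMDP S A) (π : S → A) (s : S) : ℝ :=
  ∑' t : ℕ, M.gamma ^ t * M.R (M.traj π s t) (π (M.traj π s t))

/-- The action value function `Q^π(s, a) = R(s, a) + γ V^π(T(s, a))`. -/
noncomputable def Q (M : DMDP S A) (π : S → A) (s : S) (a : A) : ℝ :=
  M.R s a + M.gamma * M.V π (M.T s a)

/-- `π ≺ π'`: pointwise `V^π ≤ V^{π'}` with strict inequality somewhere. -/
def PLt (M : DMDP S A) (π π' : S → A) : Prop :=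
  (∀ s, M.V π s ≤ M.V π' s) ∧ ∃ s, M.V π s < M.V π' s

/-- `π'` is obtained from `π` by policy improvement with arbitrary action
selection. -/
def ImpStep (M : DMDP S A) (π π' : S → A) : Prop :=
  π' ≠ π ∧ ∀ s, π' s ≠ π s → M.V π s < M.Q π s (π' s)

/-- `π'` is obtained from `π` by policy improvement with max-gain action
selection. -/
def MaxGainStep (M : DMDP S A) (π π' : S → A) : Prop :=
  π' ≠ π ∧ ∀ s, π' s ≠ π s →
    M.V π s < M.Q π s (π' s) ∧
    ∀ a, M.V π s < M.Q π s a → M.Q π s a ≤ M.Q π s (π' s)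

/-- The first time step at which a previously visited state recurs on the
trajectory of `π` from `s`. -/
noncomputable def pcLen (M : DMDP S A) (π : S → A) (s : S) : ℕ :=
  sInf {t : ℕ | ∃ t' < t, M.traj π s t' = M.traj π s t}

/-- The path-cycle `P^π_s`: the sequence of state–action–state triples
`(s_t, π(s_t), s_{t+1})` for `t` up to (but excluding) the first recurrence
of a previously visited state. -/
noncomputable def pathCycle (M : DMDP S A) (π : S → A) (s : S) : List (S × A × S) :=
  (List.range (M.pcLen π s)).map fun t =>
    (M.traj π s t, π (M.traj π s t), M.traj π s (t + 1))

/-- The multiplicity function of the DMDP digraph `G_M`: one edge from `s`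
to `T(s, a)` for every action `a`. -/
noncomputable def digraph (M : DMDP S A) [Fintype A] : S → S → ℕ :=
  fun s s' => (Finset.univ.filter fun a => M.T s a = s').card

/-- A state is non-branching if all actions lead to the same next state. -/
def NonBranching (M : DMDP S A) (s : S) : Prop := ∃ s', ∀ a, M.T s a = s'

/-- The relation `∼` on path-cycles: same sequence of states, and wherever
the actions differ the state is non-branching. -/
def PCSim (M : DMDP S A) (P₁ P₂ : List (S × A × S)) : Prop :=
  P₁.length = P₂.length ∧
  ∀ (t : ℕ) (h₁ : t < P₁.length) (h₂ : t < P₂.length),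
    (P₁.get ⟨t, h₁⟩).1 = (P₂.get ⟨t, h₂⟩).1 ∧
    (P₁.get ⟨t, h₁⟩).2.2 = (P₂.get ⟨t, h₂⟩).2.2 ∧
    ((P₁.get ⟨t, h₁⟩).2.1 ≠ (P₂.get ⟨t, h₂⟩).2.1 → M.NonBranching (P₁.get ⟨t, h₁⟩).1)

/-- The relation `≈` on path-cycles: they differ only in equivalent edges,
i.e. have the same sequences of source and target states. -/
def PCApprox (_M : DMDP S A) (P₁ P₂ : List (S × A × S)) : Prop :=
  P₁.length = P₂.length ∧
  ∀ (t : ℕ) (h₁ : t < P₁.length) (h₂ : t < P₂.length),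
    (P₁.get ⟨t, h₁⟩).1 = (P₂.get ⟨t, h₂⟩).1 ∧
    (P₁.get ⟨t, h₁⟩).2.2 = (P₂.get ⟨t, h₂⟩).2.2

end DMDP

section BregmanAux


noncomputable def gfun (r : ℕ) : ℝ := (r.factorial : ℝ) ^ ((r : ℝ)⁻¹)

lemma gfun_one_le (r : ℕ) : 1 ≤ gfun r := by
  unfold gfun
  apply Real.one_le_rpow (by exact_mod_cast (Nat.factorial_pos r)) (by positivity)

lemma gfun_nonneg (r : ℕ) : 0 ≤ gfun r := le_trans zero_le_one (gfun_one_le r)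

lemma gfun_pow (r : ℕ) (hr : r ≠ 0) : gfun r ^ r = (r.factorial : ℝ) := by
  unfold gfun
  rw [← Real.rpow_natCast ((r.factorial : ℝ) ^ ((r:ℝ)⁻¹)) r, ← Real.rpow_mul (by positivity),
    inv_mul_cancel₀ (by exact_mod_cast hr), Real.rpow_one]

lemma factorial_le_pow (r : ℕ) : r.factorial ≤ (r+1)^r := by
  induction r with
  | zero => simp
  | succ n ih =>
    calc (n+1).factorial = (n+1) * n.factorial := rfl
    _ ≤ (n+1) * (n+1)^n := by exact Nat.mul_le_mul_left _ ih
    _ = (n+1)^(n+1) := by ring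
    _ ≤ (n+2)^(n+1) := Nat.pow_le_pow_left (by omega) _

lemma gfun_mono : Monotone gfun := by
  apply monotone_nat_of_le_succ
  intro r
  rcases Nat.eq_zero_or_pos r with h | h
  · subst h; simp [gfun]
  have h1 : gfun r ^ (r * (r+1)) ≤ gfun (r+1) ^ (r * (r+1)) := by
    rw [pow_mul, gfun_pow r (by omega), pow_mul', gfun_pow (r+1) (by omega)]
    have key : (r.factorial)^(r+1) ≤ ((r+1).factorial)^r := by
      rw [Nat.factorial_succ, mul_pow, pow_succ, mul_comm (r.factorial ^ r) r.factorial]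
      exact Nat.mul_le_mul_right _ (factorial_le_pow r)
    calc (r.factorial:ℝ)^(r+1) = (((r.factorial)^(r+1) : ℕ) : ℝ) := by push_cast; ring
      _ ≤ ((((r+1).factorial)^r : ℕ) : ℝ) := by exact_mod_cast key
      _ = ((r+1).factorial:ℝ)^r := by push_cast; ring
  have h2 : gfun r ^ (r*(r+1)) ≤ gfun (r+1) ^ (r*(r+1)) → gfun r ≤ gfun (r+1) := by
    intro hh
    exact le_of_pow_le_pow_left₀ (by positivity) (gfun_nonneg _) hh
  exact h2 h1


lemma pow_sum_le_card_pow_mul_prod {ι : Type*} (K : Finset ι) (t : ι → ℕ) :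
    ((∑ k ∈ K, t k : ℕ) : ℝ) ^ (∑ k ∈ K, t k) ≤
      (K.card : ℝ) ^ (∑ k ∈ K, t k) * ∏ k ∈ K, (t k : ℝ) ^ (t k) := by
  set T : ℕ := ∑ k ∈ K, t k with hT
  rcases Nat.eq_zero_or_pos T with h0 | hpos
  · rw [h0]
    simp only [pow_zero, one_mul]
    have : ∀ k ∈ K, t k = 0 := Finset.sum_eq_zero_iff.mp h0
    rw [Finset.prod_congr rfl (fun k hk => by rw [this k hk])]
    simp
  · set K' : Finset ι := K.filter (fun k => t k ≠ 0) with hK'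
    have hTK' : ∑ k ∈ K', t k = T := by
      rw [hK', Finset.sum_filter_ne_zero]
    have hQ : ∏ k ∈ K, (t k : ℝ) ^ (t k) = ∏ k ∈ K', (t k : ℝ) ^ (t k) := by
      rw [hK']
      rw [Finset.prod_filter]
      apply Finset.prod_congr rfl
      intro k hk
      by_cases h : t k = 0 <;> simp [h]
    set Q : ℝ := ∏ k ∈ K', (t k : ℝ) ^ (t k) with hQdef
    have hQpos : 0 < Q := by
      apply Finset.prod_pos
      intro k hk
      have : t k ≠ 0 := (Finset.mem_filter.mp hk).2
      positivity
    have hTpos : (0:ℝ) < T := by exact_mod_cast hpos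
    -- AM-GM
    have amgm := Real.geom_mean_le_arith_mean_weighted K' (fun k => (t k : ℝ) / T)
      (fun k => ((t k : ℝ))⁻¹)
      (fun k _ => by positivity)
      (by rw [← Finset.sum_div]; rw [show ∑ k ∈ K', (t k:ℝ) = T by exact_mod_cast congrArg Nat.cast hTK']; field_simp)
      (fun k _ => by positivity)
    have hL : ∏ k ∈ K', ((t k : ℝ))⁻¹ ^ ((t k : ℝ) / T) = Q ^ (-(T:ℝ)⁻¹) := by
      rw [hQdef, ← Real.finset_prod_rpow _ _ (fun k _ => by positivity)]
      apply Finset.prod_congr rfl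
      intro k hk
      have htk : (0:ℝ) ≤ t k := by positivity
      rw [← Real.rpow_natCast (t k : ℝ) (t k), ← Real.rpow_mul htk,
        Real.inv_rpow htk, ← Real.rpow_neg htk]
      congr 1
      field_simp
    have hR : ∑ k ∈ K', (t k : ℝ) / T * ((t k : ℝ))⁻¹ ≤ (K.card : ℝ) / T := by
      have : ∀ k ∈ K', (t k : ℝ) / T * ((t k : ℝ))⁻¹ = 1 / T := by
        intro k hk
        have : t k ≠ 0 := (Finset.mem_filter.mp hk).2
        have : (t k : ℝ) ≠ 0 := by exact_mod_cast this
        field_simp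
      rw [Finset.sum_congr rfl this, Finset.sum_const, nsmul_eq_mul]
      have hcard : (K'.card : ℝ) ≤ K.card := by
        exact_mod_cast Finset.card_le_card (Finset.filter_subset _ _)
      calc (K'.card : ℝ) * (1/T) ≤ (K.card : ℝ) * (1/T) := by
            apply mul_le_mul_of_nonneg_right hcard (by positivity)
        _ = (K.card : ℝ) / T := by ring
    have key : Q ^ (-(T:ℝ)⁻¹) ≤ (K.card:ℝ) / T := by
      rw [← hL]; exact le_trans amgm hR
    have hcardpos : (0:ℝ) < K.card := by
      have : K.Nonempty := by
        by_contra hne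
        rw [Finset.not_nonempty_iff_eq_empty] at hne
        rw [hne] at hT; simp at hT; omega
      exact_mod_cast Finset.card_pos.mpr this
    have key2 : (T:ℝ) / K.card ≤ Q ^ ((T:ℝ)⁻¹) := by
      set x := Q ^ ((T:ℝ)⁻¹) with hx
      have hq : 0 < x := Real.rpow_pos_of_pos hQpos _
      have h1 : x⁻¹ ≤ (K.card:ℝ)/T := by
        rw [hx, ← Real.rpow_neg (le_of_lt hQpos)]; exact key
      have h2 : (1:ℝ) ≤ x * ((K.card:ℝ)/T) := by
        calc (1:ℝ) = x * x⁻¹ := (mul_inv_cancel₀ (ne_of_gt hq)).symm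
        _ ≤ x * ((K.card:ℝ)/T) := by apply mul_le_mul_of_nonneg_left h1 (le_of_lt hq)
      rw [div_le_iff₀ hcardpos]
      have h3 : (T:ℝ) ≤ x * (K.card:ℝ) := by
        have := mul_le_mul_of_nonneg_left h2 (le_of_lt hTpos)
        calc (T:ℝ) = (T:ℝ) * 1 := (mul_one _).symm
          _ ≤ (T:ℝ) * (x * ((K.card:ℝ)/T)) := mul_le_mul_of_nonneg_left h2 (le_of_lt hTpos)
          _ = x * (K.card:ℝ) := by field_simp
      exact h3
    calc ((T:ℕ):ℝ)^T = ((T:ℝ)/K.card)^T * (K.card:ℝ)^T := by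
          rw [← mul_pow, div_mul_cancel₀ _ (ne_of_gt hcardpos)]
      _ ≤ (Q ^ ((T:ℝ)⁻¹))^T * (K.card:ℝ)^T := by
          apply mul_le_mul_of_nonneg_right (pow_le_pow_left₀ (by positivity) key2 T) (by positivity)
      _ = Q * (K.card:ℝ)^T := by
          rw [← Real.rpow_natCast (Q ^ ((T:ℝ)⁻¹)) T, ← Real.rpow_mul (le_of_lt hQpos),
            inv_mul_cancel₀ (ne_of_gt hTpos), Real.rpow_one]
      _ = (K.card:ℝ)^T * ∏ k ∈ K, (t k : ℝ) ^ (t k) := by rw [hQ]; ring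


variable {V : Type*} [Fintype V] [DecidableEq V]

noncomputable def sys (s : Finset V) (N : V → Finset V) : Finset (V → V) :=
  Finset.univ.filter fun f => Set.InjOn f ↑s ∧ (∀ v ∈ s, f v ∈ N v) ∧ ∀ v, v ∉ s → f v = v

lemma mem_sys {s : Finset V} {N : V → Finset V} {f : V → V} :
    f ∈ sys s N ↔ Set.InjOn f ↑s ∧ (∀ v ∈ s, f v ∈ N v) ∧ ∀ v, v ∉ s → f v = v := by
  simp [sys]

lemma sys_empty (N : V → Finset V) : sys (∅ : Finset V) N = {fun v => v} := by
  ext f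
  simp only [mem_sys, Finset.mem_singleton]
  constructor
  · rintro ⟨-, -, h⟩
    funext v
    exact h v (by simp)
  · rintro rfl
    exact ⟨by simp [Set.InjOn], by simp, fun v _ => rfl⟩

lemma sys_card_eq_sum {s : Finset V} {N : V → Finset V} {i : V} (hi : i ∈ s) :
    (sys s N).card = ∑ k ∈ N i, ((sys s N).filter fun f => f i = k).card := by
  apply Finset.card_eq_sum_card_fiberwise
  intro f hf
  exact (mem_sys.mp hf).2.1 i hi

lemma sys_fiber_card {s : Finset V} {N : V → Finset V} {i : V} (hi : i ∈ s) {k : V}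
    (hk : k ∈ N i) :
    ((sys s N).filter fun f => f i = k).card
      = (sys (s.erase i) fun j => (N j).erase k).card := by
  refine Finset.card_nbij' (fun f => Function.update f i i) (fun g => Function.update g i k)
    ?_ ?_ ?_ ?_
  · -- maps to
    intro f hf
    obtain ⟨hmem, hfik⟩ := Finset.mem_filter.mp hf
    obtain ⟨hinj, hval, hoff⟩ := mem_sys.mp hmem
    refine mem_sys.mpr ⟨?_, ?_, ?_⟩
    · intro u hu v hv huv
      beta_reduce at huv
      have hu' := Finset.mem_erase.mp (Finset.mem_coe.mp hu)
      have hv' := Finset.mem_erase.mp (Finset.mem_coe.mp hv)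
      rw [Function.update_of_ne hu'.1, Function.update_of_ne hv'.1] at huv
      exact hinj (Finset.mem_coe.mpr hu'.2) (Finset.mem_coe.mpr hv'.2) huv
    · intro v hv
      beta_reduce
      have hvi : v ≠ i := Finset.ne_of_mem_erase hv
      have hvs : v ∈ s := Finset.mem_of_mem_erase hv
      rw [Function.update_of_ne hvi]
      refine Finset.mem_erase.mpr ⟨?_, hval v hvs⟩
      intro hcon
      exact hvi (hinj hvs hi (by rw [hcon, hfik]))
    · intro v hv
      beta_reduce
      by_cases hvi : v = i
      · subst hvi; simp
      · rw [Function.update_of_ne hvi]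
        exact (mem_sys.mp hmem).2.2 v (fun hvs => hv (Finset.mem_erase.mpr ⟨hvi, hvs⟩))
  · -- inverse maps to
    intro g hg
    obtain ⟨hinj, hval, hoff⟩ := mem_sys.mp hg
    have hgi : g i = i := hoff i (Finset.notMem_erase i s)
    refine Finset.mem_filter.mpr ⟨mem_sys.mpr ⟨?_, ?_, ?_⟩, by show Function.update g i k i = k; simp⟩
    · intro u hu v hv huv
      beta_reduce at huv
      have hu' : u ∈ s := Finset.mem_coe.mp hu
      have hv' : v ∈ s := Finset.mem_coe.mp hv
      by_cases hui : u = i <;> by_cases hvi : v = i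
      · rw [hui, hvi]

      · exfalso
        rw [hui, Function.update_self, Function.update_of_ne hvi] at huv
        have : g v ∈ (N v).erase k := hval v (Finset.mem_erase.mpr ⟨hvi, hv'⟩)
        exact (Finset.mem_erase.mp this).1 huv.symm
      · exfalso
        rw [hvi, Function.update_self, Function.update_of_ne hui] at huv
        have : g u ∈ (N u).erase k := hval u (Finset.mem_erase.mpr ⟨hui, hu'⟩)
        exact (Finset.mem_erase.mp this).1 huv
      · rw [Function.update_of_ne hui, Function.update_of_ne hvi] at huv
        exact hinj (Finset.mem_coe.mpr (Finset.mem_erase.mpr ⟨hui, hu'⟩))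
          (Finset.mem_coe.mpr (Finset.mem_erase.mpr ⟨hvi, hv'⟩)) huv
    · intro v hv
      beta_reduce
      by_cases hvi : v = i
      · subst hvi; simpa using hk
      · rw [Function.update_of_ne hvi]
        exact Finset.mem_of_mem_erase (hval v (Finset.mem_erase.mpr ⟨hvi, hv⟩))
    · intro v hv
      beta_reduce
      have hvi : v ≠ i := fun h => hv (h ▸ hi)
      rw [Function.update_of_ne hvi]
      exact hoff v (fun h => hv (Finset.mem_of_mem_erase h))
  · -- left inverse
    intro f hf
    have hfik : f i = k := (Finset.mem_filter.mp hf).2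
    show Function.update (Function.update f i i) i k = f
    funext v
    by_cases hvi : v = i
    · subst hvi; simp [hfik]
    · simp [Function.update_of_ne hvi]
  · -- right inverse
    intro g hg
    have hgi : g i = i := (mem_sys.mp hg).2.2 i (Finset.notMem_erase i s)
    show Function.update (Function.update g i k) i i = g
    funext v
    by_cases hvi : v = i
    · subst hvi; simp [hgi]
    · simp [Function.update_of_ne hvi]

lemma sys_filter_card {s t : Finset V} {N : V → Finset V} {f : V → V}
    (hf : f ∈ sys s N) (hsub : ∀ v ∈ s, N v ⊆ t) (hcard : t.card = s.card) :
    ∀ j, j ∈ s → (s.filter fun i => f i ∈ N j).card = (N j).card := by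
  obtain ⟨hinj, hval, hoff⟩ := mem_sys.mp hf
  have himg : s.image f = t := by
    apply Finset.eq_of_subset_of_card_le
    · intro x hx
      obtain ⟨i, hi, rfl⟩ := Finset.mem_image.mp hx
      exact hsub i hi (hval i hi)
    · rw [Finset.card_image_of_injOn hinj, hcard]
  intro j hj
  apply Finset.card_bij (fun i _ => f i)
  · intro i hi
    exact (Finset.mem_filter.mp hi).2
  · intro u hu v hv huv
    exact hinj (Finset.mem_coe.mpr (Finset.mem_filter.mp hu).1)
      (Finset.mem_coe.mpr (Finset.mem_filter.mp hv).1) huv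
  · intro k hkj
    have hkt : k ∈ t := hsub j hj hkj
    rw [← himg] at hkt
    obtain ⟨i, his, hik⟩ := Finset.mem_image.mp hkt
    exact ⟨i, Finset.mem_filter.mpr ⟨his, hik ▸ hkj⟩, hik⟩

lemma bregman_aux : ∀ (n : ℕ) (s t : Finset V) (N : V → Finset V), s.card = n →
    (∀ v ∈ s, N v ⊆ t) → t.card = s.card →
    ((sys s N).card : ℝ) ≤ ∏ v ∈ s, gfun (N v).card := by
  intro n
  induction n with
  | zero =>
    intro s t N hs _ _
    rw [Finset.card_eq_zero.mp hs, sys_empty]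
    simp
  | succ n ih =>
    intro s t N hs hsub hcard
    have hsne : s.Nonempty := by rw [← Finset.card_pos, hs]; omega
    obtain ⟨i, hi⟩ := hsne
    set P := (sys s N).card with hP
    rcases Nat.eq_zero_or_pos P with hP0 | hPpos
    · rw [hP0]
      exact_mod_cast Finset.prod_nonneg fun j _ => gfun_nonneg _
    · set S := sys s N with hS
      set r : V → ℕ := fun j => (N j).card with hr
      set c : V → V → ℕ := fun i' k => ((S.filter fun g => g i' = k).card) with hc
      have hrle : ∀ j ∈ s, r j ≤ s.card := fun j hj =>
        le_trans (Finset.card_le_card (hsub j hj)) (le_of_eq hcard)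
      have hrpos : ∀ j ∈ s, 1 ≤ r j := by
        intro j hj
        obtain ⟨f₀, hf₀⟩ := Finset.card_pos.mp hPpos
        exact Finset.card_pos.mpr ⟨f₀ j, (mem_sys.mp hf₀).2.1 j hj⟩
      -- fiber product identity
      have fiber_prod : ∀ i' ∈ s,
          ∏ k ∈ N i', ((c i' k : ℝ)) ^ (c i' k) = ∏ f ∈ S, (c i' (f i') : ℝ) := by
        intro i' hi'
        rw [← Finset.prod_fiberwise_of_maps_to' (fun f hf => (mem_sys.mp hf).2.1 i' hi')
          (fun k => (c i' k : ℝ))]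
        apply Finset.prod_congr rfl
        intro k _
        rw [Finset.prod_const]
      -- step 1
      have step1 : ∀ i' ∈ s, ((P : ℝ)) ^ P ≤ (r i' : ℝ) ^ P * ∏ f ∈ S, (c i' (f i') : ℝ) := by
        intro i' hi'
        have hsum : ∑ k ∈ N i', c i' k = P := (sys_card_eq_sum hi').symm
        have h := pow_sum_le_card_pow_mul_prod (N i') (c i')
        rw [hsum] at h
        rw [← fiber_prod i' hi']
        exact h
      -- step 2
      have step2 : ∀ i' ∈ s, ∀ f ∈ S, (c i' (f i') : ℝ) ≤
          ∏ j ∈ s.erase i', gfun ((N j).erase (f i')).card := by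
        intro i' hi' f hf
        have hk : f i' ∈ N i' := (mem_sys.mp hf).2.1 i' hi'
        have : c i' (f i') = (sys (s.erase i') fun j => (N j).erase (f i')).card :=
          sys_fiber_card hi' hk
        rw [this]
        apply ih (s.erase i') (t.erase (f i'))
        · rw [Finset.card_erase_of_mem hi', hs]
          omega
        · intro v hv
          exact Finset.erase_subset_erase _ (hsub v (Finset.mem_of_mem_erase hv))
        · rw [Finset.card_erase_of_mem (hsub i' hi' hk), Finset.card_erase_of_mem hi', hcard]
      -- step 6 : inner product evaluation for fixed f
      have step6 : ∀ f ∈ S, ∀ j ∈ s,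
          ∏ i' ∈ s.erase j, gfun ((N j).erase (f i')).card
            = gfun (r j - 1) ^ (r j - 1) * gfun (r j) ^ (s.card - r j) := by
        intro f hf j hj
        have hfj : f j ∈ N j := (mem_sys.mp hf).2.1 j hj
        have hfilter : ((s.erase j).filter fun i' => f i' ∈ N j).card = r j - 1 := by
          have h1 : (s.filter fun i' => f i' ∈ N j).card = r j :=
            sys_filter_card hf hsub hcard j hj
          have h2 : (s.erase j).filter (fun i' => f i' ∈ N j)
              = (s.filter fun i' => f i' ∈ N j).erase j := by
            ext x
            simp only [Finset.mem_filter, Finset.mem_erase]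
            tauto
          have hjmem : j ∈ Finset.filter (fun i' => f i' ∈ N j) s :=
            Finset.mem_filter.mpr ⟨hj, hfj⟩
          rw [h2, Finset.card_erase_of_mem hjmem, h1]
        have hinj : Set.InjOn f ↑s := (mem_sys.mp hf).1
        rw [← Finset.prod_filter_mul_prod_filter_not (s.erase j) (fun i' => f i' ∈ N j)]
        have e1 : ∀ i' ∈ (s.erase j).filter (fun i' => f i' ∈ N j),
            gfun ((N j).erase (f i')).card = gfun (r j - 1) := by
          intro i' hi'
          obtain ⟨hi'e, hfi⟩ := Finset.mem_filter.mp hi'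
          rw [Finset.card_erase_of_mem hfi]
        have e2 : ∀ i' ∈ (s.erase j).filter (fun i' => ¬ f i' ∈ N j),
            gfun ((N j).erase (f i')).card = gfun (r j) := by
          intro i' hi'
          obtain ⟨hi'e, hfi⟩ := Finset.mem_filter.mp hi'
          rw [Finset.erase_eq_of_notMem hfi]
        have hfilter2 : ((s.erase j).filter fun i' => ¬ f i' ∈ N j).card = s.card - r j := by
          rw [Finset.filter_not, Finset.card_sdiff_of_subset (Finset.filter_subset _ _), hfilter,
            Finset.card_erase_of_mem hj]
          have := hrle j hj
          have := hrpos j hj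
          omega
        rw [Finset.prod_congr rfl e1, Finset.prod_congr rfl e2, Finset.prod_const,
          Finset.prod_const, hfilter, hfilter2]
      -- combine
      have hprodnn : (0:ℝ) ≤ ∏ j ∈ s, gfun (r j) := Finset.prod_nonneg fun j _ => gfun_nonneg _
      have main : ((P : ℝ)) ^ (s.card * P) ≤ (∏ j ∈ s, gfun (r j)) ^ (s.card * P) := by
        calc ((P : ℝ)) ^ (s.card * P) = ∏ i' ∈ s, ((P : ℝ)) ^ P := by
              rw [Finset.prod_const, ← pow_mul, Nat.mul_comm P s.card]
          _ ≤ ∏ i' ∈ s, ((r i' : ℝ) ^ P * ∏ f ∈ S, (c i' (f i') : ℝ)) := by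
              apply Finset.prod_le_prod (fun i' _ => by positivity) step1
          _ ≤ ∏ i' ∈ s, ((r i' : ℝ) ^ P *
                ∏ f ∈ S, ∏ j ∈ s.erase i', gfun ((N j).erase (f i')).card) := by
              apply Finset.prod_le_prod
              · intro i' hi'
                apply mul_nonneg (by positivity)
                exact Finset.prod_nonneg fun f _ => by positivity
              · intro i' hi'
                apply mul_le_mul_of_nonneg_left _ (by positivity)
                apply Finset.prod_le_prod (fun f _ => by positivity) (step2 i' hi')
          _ = (∏ i' ∈ s, (r i' : ℝ) ^ P) *
                ∏ i' ∈ s, ∏ f ∈ S, ∏ j ∈ s.erase i', gfun ((N j).erase (f i')).card := by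
              rw [Finset.prod_mul_distrib]
          _ = (∏ i' ∈ s, (r i' : ℝ) ^ P) *
                ∏ f ∈ S, ∏ i' ∈ s, ∏ j ∈ s.erase i', gfun ((N j).erase (f i')).card := by
              rw [Finset.prod_comm]
          _ = (∏ i' ∈ s, (r i' : ℝ) ^ P) *
                ∏ f ∈ S, ∏ j ∈ s, ∏ i' ∈ s.erase j, gfun ((N j).erase (f i')).card := by
              congr 1
              apply Finset.prod_congr rfl
              intro f _
              apply Finset.prod_comm'
              intro x y
              constructor
              · rintro ⟨hx, hy⟩
                exact ⟨Finset.mem_erase.mpr ⟨fun h => (Finset.mem_erase.mp hy).1 h.symm, hx⟩,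
                  Finset.mem_of_mem_erase hy⟩
              · rintro ⟨hx, hy⟩
                exact ⟨Finset.mem_of_mem_erase hx,
                  Finset.mem_erase.mpr ⟨fun h => (Finset.mem_erase.mp hx).1 h.symm, hy⟩⟩
          _ = (∏ i' ∈ s, (r i' : ℝ) ^ P) *
                ∏ f ∈ S, ∏ j ∈ s, (gfun (r j - 1) ^ (r j - 1) * gfun (r j) ^ (s.card - r j)) := by
              congr 1
              apply Finset.prod_congr rfl
              intro f hf
              exact Finset.prod_congr rfl (step6 f hf)
          _ = ∏ f ∈ S, ∏ j ∈ s, ((r j : ℝ) * (gfun (r j - 1) ^ (r j - 1) * gfun (r j) ^ (s.card - r j))) := by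
              rw [Finset.prod_pow (s := s) (n := P) (f := fun j => (r j : ℝ))]
              rw [show ((∏ j ∈ s, (r j:ℝ))^P) = ∏ f ∈ S, ∏ j ∈ s, (r j : ℝ) from by
                rw [Finset.prod_const, hP]]
              rw [← Finset.prod_mul_distrib]
              apply Finset.prod_congr rfl
              intro f _
              rw [← Finset.prod_mul_distrib]
          _ = ∏ f ∈ S, ∏ j ∈ s, gfun (r j) ^ s.card := by
              apply Finset.prod_congr rfl
              intro f hf
              apply Finset.prod_congr rfl
              intro j hj
              have h1 : (r j : ℝ) * gfun (r j - 1) ^ (r j - 1) = gfun (r j) ^ (r j) := by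
                have hj1 := hrpos j hj
                rcases Nat.eq_or_lt_of_le hj1 with h | h
                · rw [← h]; norm_num [gfun]
                · rw [gfun_pow (r j - 1) (by omega), gfun_pow (r j) (by omega)]
                  rw [show ((r j : ℕ):ℝ) * ((r j - 1).factorial : ℝ)
                      = ((r j * (r j - 1).factorial : ℕ) : ℝ) from by push_cast; ring,
                    Nat.mul_factorial_pred (by omega)]
              rw [← mul_assoc, h1, ← pow_add]
              congr 1
              have := hrle j hj
              have := hrpos j hj
              omega
          _ = (∏ j ∈ s, gfun (r j)) ^ (s.card * P) := by
              rw [Finset.prod_congr rfl (fun f (_ : f ∈ S) =>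
                Finset.prod_pow s s.card (fun j => gfun (r j)))]
              rw [Finset.prod_const, ← pow_mul, ← hP]
      -- conclude
      have hpos : 0 < s.card * P := by
        apply Nat.mul_pos _ hPpos
        rw [hs]; omega
      exact le_of_pow_le_pow_left₀ hpos.ne' hprodnn main


lemma lemA : ∀ k : ℕ, 2 ≤ k →
    (k.factorial : ℝ) * Real.exp (((k:ℝ)+1)/2) ≤ ((k:ℝ)+1)^k := by
  intro k hk
  induction k with
  | zero => omega
  | succ m ih =>
    rcases Nat.lt_or_ge m 2 with hm | hm
    · interval_cases m
      · omega
      · -- k = 2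
        have h1 : Real.exp (((2:ℝ)+1)/2) ^ 2 = Real.exp 3 := by
          rw [← Real.exp_nat_mul]; norm_num
        have h2 : Real.exp 3 ≤ 20.25 := by
          have he := Real.exp_one_lt_d9
          calc Real.exp 3 = (Real.exp 1)^(3:ℕ) := by
                rw [← Real.exp_nat_mul]; norm_num
          _ ≤ 2.7182818286^(3:ℕ) := by
              apply pow_le_pow_left₀ (le_of_lt (Real.exp_pos 1)) (le_of_lt he)
          _ ≤ 20.25 := by norm_num
        have h3 : (0:ℝ) < Real.exp (((2:ℝ)+1)/2) := Real.exp_pos _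
        have : (((1+1:ℕ):ℝ)+1) = 3 := by norm_num
        show ((2:ℕ).factorial : ℝ) * Real.exp ((((1+1:ℕ):ℝ)+1)/2) ≤ (((1+1:ℕ):ℝ)+1)^2
        rw [this]
        have hfac : ((2:ℕ).factorial : ℝ) = 2 := by norm_num [Nat.factorial]
        rw [hfac]
        nlinarith [h1, h2, h3]
    · -- step
      have hstep := ih hm
      set x : ℝ := 1/(2*((m:ℝ)+1)) with hx
      have hxpos : 0 < x := by positivity
      have hA : ((m:ℝ)+1)/((m:ℝ)+2) ≤ Real.exp (-x) := by
        have h1 := Real.add_one_le_exp (-x)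
        have hB : ((m:ℝ)+1)/((m:ℝ)+2) ≤ 1 - x := by
          have hid : 1 - x = (2*(m:ℝ)+1)/(2*(m:ℝ)+2) := by
            rw [hx]; field_simp; ring
          rw [hid, div_le_div_iff₀ (by positivity) (by positivity)]
          nlinarith [sq_nonneg ((m:ℝ))]
        linarith
      have hkey : Real.exp x ≤ ((m:ℝ)+2)/((m:ℝ)+1) := by
        have hpos1 : (0:ℝ) < ((m:ℝ)+1)/((m:ℝ)+2) := by positivity
        have h2 : (Real.exp (-x))⁻¹ ≤ (((m:ℝ)+1)/((m:ℝ)+2))⁻¹ :=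
          inv_anti₀ hpos1 hA
        rw [Real.exp_neg, inv_inv] at h2
        rwa [inv_div] at h2
      have hkey2 : Real.exp (1/2 : ℝ) ≤ (((m:ℝ)+2)/((m:ℝ)+1))^(m+1) := by
        have h3 := pow_le_pow_left₀ (le_of_lt (Real.exp_pos x)) hkey (m+1)
        rwa [← Real.exp_nat_mul, show ((m+1:ℕ):ℝ) * x = 1/2 by
          rw [hx]; push_cast; field_simp] at h3
      push_cast [Nat.factorial_succ]
      rw [show ((m:ℝ)+1+1)/2 = ((m:ℝ)+1)/2 + (1/2:ℝ) by ring, Real.exp_add]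
      calc ((m:ℝ)+1) * (m.factorial:ℝ) * (Real.exp (((m:ℝ)+1)/2) * Real.exp (1/2:ℝ))
          = ((m:ℝ)+1) * ((m.factorial:ℝ) * Real.exp (((m:ℝ)+1)/2)) * Real.exp (1/2:ℝ) := by
            ring
        _ ≤ ((m:ℝ)+1) * ((m:ℝ)+1)^m * Real.exp (1/2:ℝ) := by
            apply mul_le_mul_of_nonneg_right
              (mul_le_mul_of_nonneg_left hstep (by positivity)) (Real.exp_pos _).le
        _ = ((m:ℝ)+1)^(m+1) * Real.exp (1/2:ℝ) := by ring
        _ ≤ ((m:ℝ)+1)^(m+1) * (((m:ℝ)+2)/((m:ℝ)+1))^(m+1) :=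
            mul_le_mul_of_nonneg_left hkey2 (by positivity)
        _ = ((m:ℝ)+2)^(m+1) := by
            rw [← mul_pow]
            congr 1
            field_simp
        _ = ((m:ℝ)+1+1)^(m+1) := by ring_nf

-- (k!)^2 ≥ k^k
lemma lemB (k : ℕ) : k^k ≤ (k.factorial)^2 := by
  have h1 : ∏ i ∈ Finset.range k, (i+1) = k.factorial := Finset.prod_range_add_one_eq_factorial k
  have h2 : ∏ i ∈ Finset.range k, (k-i) = k.factorial := by
    rw [← h1, ← Finset.prod_range_reflect]
    apply Finset.prod_congr rfl
    intro i hi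
    have := Finset.mem_range.mp hi
    omega
  calc k^k = ∏ _i ∈ Finset.range k, k := by rw [Finset.prod_const, Finset.card_range]
    _ ≤ ∏ i ∈ Finset.range k, (i+1)*(k-i) := by
        apply Finset.prod_le_prod'
        intro i hi
        have hik := Finset.mem_range.mp hi
        have h2k : i ≤ i * (k-i) := Nat.le_mul_of_pos_right i (by omega)
        calc k = (k-i) + i := by omega
          _ ≤ (k-i) + i*(k-i) := Nat.add_le_add_left h2k _
          _ = (i+1)*(k-i) := by ring
    _ = (∏ i ∈ Finset.range k, (i+1)) * (∏ i ∈ Finset.range k, (k-i)) := by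
        rw [← Finset.prod_mul_distrib]
    _ = (k.factorial)^2 := by rw [h1, h2]; ring

lemma gfun_sq (k : ℕ) (hk : 1 ≤ k) : (k:ℝ) ≤ gfun k ^ 2 := by
  have h1 : ((k:ℝ))^k ≤ (gfun k ^ 2)^k := by
    rw [← pow_mul, mul_comm 2 k, pow_mul, gfun_pow k (by omega)]
    exact_mod_cast lemB k
  exact le_of_pow_le_pow_left₀ (by omega) (by positivity) h1

lemma beta_ge (k : ℕ) (hk : 2 ≤ k) :
    gfun k + 1/(2 * gfun k) ≤ gfun (k+1) := by
  set γ := gfun k with hγ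
  set β := gfun (k+1) with hβ
  have hγ1 : 1 ≤ γ := gfun_one_le k
  have hγpos : 0 < γ := by linarith
  have hγ2 : (k:ℝ) ≤ γ^2 := gfun_sq k (by omega)
  -- β ≥ γ * exp (1/(2k))
  have hmain : γ * Real.exp (1/(2*(k:ℝ))) ≤ β := by
    have hM : (γ * Real.exp (1/(2*(k:ℝ))))^(k*(k+1)) ≤ β^(k*(k+1)) := by
      have e1 : β^(k*(k+1)) = ((k+1).factorial : ℝ)^k := by
        rw [mul_comm k (k+1), pow_mul, gfun_pow (k+1) (by omega)]
      have e2 : γ^(k*(k+1)) = ((k.factorial : ℝ))^(k+1) := by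
        rw [pow_mul, gfun_pow k (by omega)]
      have e3 : (Real.exp (1/(2*(k:ℝ))))^(k*(k+1)) = Real.exp (((k:ℝ)+1)/2) := by
        rw [← Real.exp_nat_mul]
        congr 1
        have hk0 : (k:ℝ) ≠ 0 := by positivity
        push_cast
        field_simp
      rw [mul_pow, e1, e2, e3]
      have hA := lemA k hk
      calc ((k.factorial:ℝ))^(k+1) * Real.exp (((k:ℝ)+1)/2)
          = ((k.factorial:ℝ))^k * ((k.factorial:ℝ) * Real.exp (((k:ℝ)+1)/2)) := by ring
        _ ≤ ((k.factorial:ℝ))^k * ((k:ℝ)+1)^k := by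
            apply mul_le_mul_of_nonneg_left hA (by positivity)
        _ = (((k:ℝ)+1) * (k.factorial:ℝ))^k := by rw [mul_pow]; ring
        _ = (((k+1).factorial : ℝ))^k := by
            congr 1
            rw [Nat.factorial_succ]
            push_cast
            ring
    exact le_of_pow_le_pow_left₀ (by positivity) (gfun_nonneg _) hM
  have h2 : γ * Real.exp (1/(2*γ^2)) ≤ γ * Real.exp (1/(2*(k:ℝ))) := by
    apply mul_le_mul_of_nonneg_left _ (le_of_lt hγpos)
    apply Real.exp_le_exp.mpr
    apply div_le_div_of_nonneg_left (by norm_num) (by positivity)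
    have : (2:ℝ) ≤ (k:ℝ) := by exact_mod_cast hk
    nlinarith
  have h3 : γ + 1/(2*γ) ≤ γ * Real.exp (1/(2*γ^2)) := by
    have := Real.add_one_le_exp (1/(2*γ^2))
    have h4 : γ * (1/(2*γ^2) + 1) ≤ γ * Real.exp (1/(2*γ^2)) :=
      mul_le_mul_of_nonneg_left this (le_of_lt hγpos)
    calc γ + 1/(2*γ) = γ * (1/(2*γ^2) + 1) := by field_simp; ring
      _ ≤ _ := h4
  linarith

lemma pow_sub_pow_ge (β γ : ℝ) (hγ : 0 ≤ γ) (hβ : γ ≤ β) (a : ℕ) (ha : 1 ≤ a) :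
    (a:ℝ) * γ^(a-1) * (β - γ) ≤ β^a - γ^a := by
  induction a with
  | zero => omega
  | succ b ihb =>
    rcases Nat.eq_zero_or_pos b with hb | hb
    · subst hb; simp
    · have ih := ihb hb
      have hβ0 : 0 ≤ β := le_trans hγ hβ
      have hbb : b - 1 + 1 = b := by omega
      have hγb : γ^(b-1) ≤ β^(b-1) := pow_le_pow_left₀ hγ hβ _
      have e : (b+1:ℕ) - 1 = b := by omega
      rw [e]
      have expand : β^(b+1) - γ^(b+1) = β * (β^b - γ^b) + (β - γ) * γ^b := by ring
      rw [expand]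
      have h5 : ((b:ℝ)) * γ^(b-1) * (β-γ) * 1 ≤ (β^b - γ^b) * 1 := by
        simpa using ih
      have h6 : β * ((b:ℝ) * γ^(b-1) * (β-γ)) ≤ β * (β^b - γ^b) :=
        mul_le_mul_of_nonneg_left ih hβ0
      have h7 : γ * ((b:ℝ) * γ^(b-1) * (β-γ)) ≤ β * ((b:ℝ) * γ^(b-1) * (β-γ)) := by
        apply mul_le_mul_of_nonneg_right hβ
        exact mul_nonneg (mul_nonneg (by positivity) (by positivity)) (by linarith)
      have h8 : γ * ((b:ℝ) * γ^(b-1) * (β-γ)) = (b:ℝ) * γ^b * (β-γ) := by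
        rw [show γ * ((b:ℝ) * γ^(b-1) * (β-γ)) = (b:ℝ) * (γ^(b-1) * γ) * (β-γ) by ring,
          ← pow_succ, hbb]
      push_cast
      nlinarith [h6, h7, h8, mul_nonneg (by positivity : (0:ℝ) ≤ γ^b) (by linarith : (0:ℝ) ≤ β - γ)]

lemma count_ineq (γ β : ℝ) (hγ1 : 1 ≤ γ) (hγβ : γ ≤ β) (hγ2 : 2 ≤ γ^2)
    (hhalf : 1/2 ≤ γ * (β - γ)) (a n : ℕ) (han : a ≤ n) :
    (a:ℝ) + γ^a * β^(n-a) - 1 ≤ β^n := by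
  have hβ1 : 1 ≤ β := le_trans hγ1 hγβ
  have hγpos : 0 < γ := by linarith
  have hβpos : 0 < β := by linarith
  have hsplit : β^n = β^(n-a) * β^a := by
    rw [← pow_add]
    congr 1
    omega
  rcases Nat.eq_zero_or_pos a with h0 | hapos
  · subst h0
    simp only [Nat.cast_zero, pow_zero, Nat.sub_zero, one_mul, zero_add]
    linarith
  -- reduce to (a-1) ≤ β^(n-a) * (β^a - γ^a)
  have hred : ((a:ℝ) - 1) ≤ β^(n-a) * (β^a - γ^a) → (a:ℝ) + γ^a * β^(n-a) - 1 ≤ β^n := by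
    intro h
    rw [hsplit]
    nlinarith [h]
  apply hred
  have hdiff := pow_sub_pow_ge β γ (by linarith) hγβ a hapos
  have hβna : 1 ≤ β^(n-a) := one_le_pow₀ hβ1
  have hγ43 : (4:ℝ)/3 ≤ γ := by nlinarith
  -- (a-1) ≤ a * γ^(a-1) * (β - γ)
  have hmain : ((a:ℝ) - 1) ≤ (a:ℝ) * γ^(a-1) * (β - γ) := by
    rcases Nat.eq_or_lt_of_le hapos with h1 | h1
    · rw [← h1]
      norm_num
      nlinarith
    · -- a ≥ 2
      have ha2 : 2 ≤ a := h1
      -- key : 2*(a-1) ≤ a * γ^(a-2)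
      have key : ∀ b : ℕ, 2 ≤ b → 2*((b:ℝ) - 1) ≤ (b:ℝ) * γ^(b-2) := by
        intro b
        induction b with
        | zero => omega
        | succ c ihc =>
          intro hc
          rcases Nat.lt_or_ge c 2 with hc2 | hc2
          · interval_cases c
            · omega
            · norm_num
          · have ihcc := ihc hc2
            have e1 : c + 1 - 2 = (c - 2) + 1 := by omega
            rw [e1, pow_succ]
            have hp : (1:ℝ) ≤ γ^(c-2) := one_le_pow₀ hγ1
            have hc3 : (2:ℝ) ≤ (c:ℝ) := by exact_mod_cast hc2
            push_cast
            nlinarith [ihcc, hp, hγ43, hc3]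
      have hkey := key a ha2
      have e2 : a - 1 = (a - 2) + 1 := by omega
      have hgg : γ^(a-1) = γ^(a-2) * γ := by rw [e2, pow_succ]
      rw [hgg]
      have ha2R : (2:ℝ) ≤ (a:ℝ) := by exact_mod_cast ha2
      have hpnn : (0:ℝ) ≤ γ^(a-2) := by positivity
      -- a * (γ^(a-2) * γ) * (β-γ) = a * γ^(a-2) * (γ*(β-γ)) ≥ a*γ^(a-2) * (1/2) ≥ (a-1)
      have h9 : (a:ℝ) * (γ^(a-2) * γ) * (β - γ) = (a:ℝ) * γ^(a-2) * (γ * (β - γ)) := by ring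
      rw [h9]
      have h10 : (a:ℝ) * γ^(a-2) * (1/2) ≤ (a:ℝ) * γ^(a-2) * (γ * (β-γ)) := by
        apply mul_le_mul_of_nonneg_left hhalf
        positivity
      nlinarith [hkey, h10]
  calc ((a:ℝ) - 1) ≤ (a:ℝ) * γ^(a-1) * (β - γ) := hmain
    _ ≤ β^a - γ^a := hdiff
    _ ≤ β^(n-a) * (β^a - γ^a) := by
        have hdnn : (0:ℝ) ≤ β^a - γ^a := by
          have : γ^a ≤ β^a := pow_le_pow_left₀ (by linarith) hγβ a
          linarith
        nlinarith [hβna, hdnn]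

end BregmanAux

theorem stmt_0 (n k : ℕ) (hk : 2 ≤ k) (G : Fin n → Fin n → ℕ)
    (hsimple : ∀ u v : Fin n, G u v ≤ 1)
    (hdeg : ∀ v : Fin n, (∑ u, G v u) ≤ k) :
    (cycleCount n G : ℝ) ≤
      (Nat.factorial (k + 1) : ℝ) ^ ((n : ℝ) / ((k : ℝ) + 1)) := by
  set N : Fin n → Finset (Fin n) :=
    fun v => insert v (Finset.univ.filter fun u => u ≠ v ∧ G v u = 1) with hN
  set L : Finset (Fin n) := Finset.univ.filter (fun v => G v v = 1) with hL
  set a : ℕ := L.card with ha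
  set S : Finset (Fin n → Fin n) := sys Finset.univ N with hS
  set P : ℕ := S.card with hP
  set γ : ℝ := gfun k with hγ
  set β : ℝ := gfun (k+1) with hβ
  have hNV : ∀ v, v ∈ N v := fun v => Finset.mem_insert_self v _
  -- degree bound on N
  have hNcard : ∀ v, (N v).card + G v v ≤ k + 1 := by
    intro v
    have h1 : (N v).card ≤ 1 + (Finset.univ.filter fun u => u ≠ v ∧ G v u = 1).card := by
      rw [hN]
      beta_reduce
      have := Finset.card_insert_le v (Finset.univ.filter fun u => u ≠ v ∧ G v u = 1)
      omega
    have h2 : (Finset.univ.filter fun u => u ≠ v ∧ G v u = 1).card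
        = ∑ u ∈ (Finset.univ.filter fun u => u ≠ v ∧ G v u = 1), G v u := by
      rw [Finset.card_eq_sum_ones]
      apply Finset.sum_congr rfl
      intro u hu
      exact ((Finset.mem_filter.mp hu).2.2).symm
    have h3 : (Finset.univ.filter fun u => u ≠ v ∧ G v u = 1) ⊆ Finset.univ.erase v := by
      intro u hu
      exact Finset.mem_erase.mpr ⟨(Finset.mem_filter.mp hu).2.1, Finset.mem_univ u⟩
    have h4 : ∑ u ∈ (Finset.univ.filter fun u => u ≠ v ∧ G v u = 1), G v u
        ≤ ∑ u ∈ Finset.univ.erase v, G v u := Finset.sum_le_sum_of_subset h3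
    have h5 : ∑ u ∈ Finset.univ.erase v, G v u + G v v = ∑ u, G v u :=
      Finset.sum_erase_add _ _ (Finset.mem_univ v)
    have h6 := hdeg v
    omega
  have hNk1 : ∀ v, (N v).card ≤ k + 1 := fun v => by have := hNcard v; omega
  have hNk : ∀ v ∈ L, (N v).card ≤ k := by
    intro v hv
    have h1 : G v v = 1 := (Finset.mem_filter.mp hv).2
    have := hNcard v
    omega
  -- identity is in S
  have hid : (fun v : Fin n => v) ∈ S := by
    rw [hS]
    exact mem_sys.mpr ⟨Function.injective_id.injOn, fun v _ => hNV v,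
      fun v hv => absurd (Finset.mem_univ v) hv⟩
  have hPpos : 1 ≤ P := Finset.card_pos.mpr ⟨_, hid⟩
  -- diagonal sum
  have hdiag : ∑ v, G v v = a := by
    rw [ha, hL, Finset.card_filter]
    apply Finset.sum_congr rfl
    intro v _
    have := hsimple v v
    by_cases h : G v v = 1 <;> simp [h] <;> omega
  -- cycle sum bound
  set Csum : ℕ := ∑ σ : Equiv.Perm (Fin n),
    if σ.IsCycle then ∏ v ∈ σ.support, G v (σ v) else 0 with hCsum
  have hCbound : Csum ≤ P - 1 := by
    set T : Finset (Equiv.Perm (Fin n)) :=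
      (Finset.univ.filter fun σ : Equiv.Perm (Fin n) => σ.IsCycle).filter
        (fun σ => ∏ v ∈ σ.support, G v (σ v) = 1) with hT
    have hstep : Csum = T.card := by
      rw [hCsum, hT, ← Finset.sum_filter]
      rw [Finset.card_filter]
      apply Finset.sum_congr rfl
      intro σ hσ
      have hle : ∏ v ∈ σ.support, G v (σ v) ≤ 1 :=
        Finset.prod_le_one (fun v _ => Nat.zero_le _) (fun v _ => hsimple v (σ v))
      by_cases h : ∏ v ∈ σ.support, G v (σ v) = 1
      · simp [h]
      · have : ∏ v ∈ σ.support, G v (σ v) = 0 := by omega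
        simp [h, this]
    rw [hstep]
    have hsub : T.card ≤ (S.erase (fun v => v)).card := by
      apply Finset.card_le_card_of_injOn (fun σ : Equiv.Perm (Fin n) => (σ : Fin n → Fin n))
      · intro σ hσ
        obtain ⟨hσ1, hσ2⟩ := Finset.mem_filter.mp hσ
        have hcyc : σ.IsCycle := (Finset.mem_filter.mp hσ1).2
        refine Finset.mem_erase.mpr ⟨?_, ?_⟩
        · intro hcon
          apply hcyc.ne_one
          exact Equiv.ext (fun x => congrFun hcon x)
        · rw [hS]
          refine mem_sys.mpr ⟨σ.injective.injOn, ?_, fun v hv => absurd (Finset.mem_univ v) hv⟩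
          intro v _
          by_cases hfix : σ v = v
          · show σ v ∈ N v; rw [hfix]; exact hNV v
          · apply Finset.mem_insert_of_mem
            refine Finset.mem_filter.mpr ⟨Finset.mem_univ _, hfix, ?_⟩
            have hvsupp : v ∈ σ.support := Equiv.Perm.mem_support.mpr hfix
            have hdvd : G v (σ v) ∣ ∏ w ∈ σ.support, G w (σ w) :=
              Finset.dvd_prod_of_mem _ hvsupp
            rw [hσ2] at hdvd
            exact Nat.dvd_one.mp hdvd
      · intro σ _ τ _ h
        exact Equiv.coe_fn_injective h
    have herase : (S.erase (fun v => v)).card = P - 1 := by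
      rw [Finset.card_erase_of_mem hid, hP]
    omega
  -- Bregman bound
  have hSbound : (P : ℝ) ≤ γ ^ a * β ^ (n - a) := by
    have hb := bregman_aux n Finset.univ Finset.univ N (by simp) (fun v _ => Finset.subset_univ _) rfl
    rw [← hS] at hb
    apply le_trans hb
    rw [← Finset.prod_filter_mul_prod_filter_not Finset.univ (fun v => G v v = 1)
      (fun v => gfun (N v).card)]
    have hL1 : ∏ v ∈ L, gfun (N v).card ≤ γ ^ a := by
      rw [ha, ← Finset.prod_const]
      apply Finset.prod_le_prod (fun v _ => gfun_nonneg _)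
      intro v hv
      exact gfun_mono (hNk v hv)
    have hcardL2 : (Finset.univ.filter fun v => ¬ G v v = 1).card = n - a := by
      have := Finset.card_filter_add_card_filter_not (s := (Finset.univ : Finset (Fin n)))
        (p := fun v => G v v = 1)
      rw [← hL, Finset.card_univ, Fintype.card_fin] at this
      omega
    have hL2 : ∏ v ∈ Finset.univ.filter (fun v => ¬ G v v = 1), gfun (N v).card
        ≤ β ^ (n - a) := by
      rw [← hcardL2, ← Finset.prod_const]
      apply Finset.prod_le_prod (fun v _ => gfun_nonneg _)
      intro v hv
      exact gfun_mono (hNk1 v)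
    have h1 : (0:ℝ) ≤ ∏ v ∈ L, gfun (N v).card := Finset.prod_nonneg fun v _ => gfun_nonneg _
    have h2 : (0:ℝ) ≤ β ^ (n-a) := pow_nonneg (gfun_nonneg _) _
    calc (∏ v ∈ Finset.univ.filter (fun v => G v v = 1), gfun (N v).card) *
          ∏ v ∈ Finset.univ.filter (fun v => ¬ G v v = 1), gfun (N v).card
        = (∏ v ∈ L, gfun (N v).card) *
          ∏ v ∈ Finset.univ.filter (fun v => ¬ G v v = 1), gfun (N v).card := by rw [hL]
      _ ≤ (∏ v ∈ L, gfun (N v).card) * β ^ (n-a) := by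
          apply mul_le_mul_of_nonneg_left hL2 h1
      _ ≤ γ ^ a * β ^ (n-a) := by
          apply mul_le_mul_of_nonneg_right hL1 h2
  -- analytic facts
  have hγ1 : 1 ≤ γ := gfun_one_le k
  have hγβ : γ ≤ β := gfun_mono (by omega)
  have hγ2 : 2 ≤ γ^2 := by
    have := gfun_sq k (by omega)
    have h2k : (2:ℝ) ≤ (k:ℝ) := by exact_mod_cast hk
    linarith
  have hhalf : 1/2 ≤ γ * (β - γ) := by
    have hb := beta_ge k hk
    have hγpos : (0:ℝ) < γ := by linarith
    have : 1/(2*γ) ≤ β - γ := by rw [← hγ, ← hβ] at hb; linarith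
    calc (1:ℝ)/2 = γ * (1/(2*γ)) := by field_simp
      _ ≤ γ * (β - γ) := mul_le_mul_of_nonneg_left this (le_of_lt hγpos)
  have han : a ≤ n := by
    rw [ha, hL]
    calc L.card ≤ (Finset.univ : Finset (Fin n)).card := Finset.card_le_card (Finset.filter_subset _ _)
      _ = n := by rw [Finset.card_univ, Fintype.card_fin]
  have hfinal := count_ineq γ β hγ1 hγβ hγ2 hhalf a n han
  -- chain
  have hchain : (cycleCount n G : ℝ) ≤ β ^ n := by
    have e1 : cycleCount n G = a + Csum := by rw [cycleCount, hdiag, hCsum]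
    have e2 : (Csum : ℝ) ≤ (P : ℝ) - 1 := by
      have := hCbound
      have h3 : (Csum:ℝ) ≤ ((P - 1 : ℕ) : ℝ) := by exact_mod_cast this
      rwa [Nat.cast_sub hPpos, Nat.cast_one] at h3
    have e4 : (0:ℝ) ≤ γ^a := pow_nonneg (by linarith) _
    calc (cycleCount n G : ℝ) = (a:ℝ) + (Csum:ℝ) := by rw [e1]; push_cast; ring
      _ ≤ (a:ℝ) + ((P:ℝ) - 1) := by linarith
      _ ≤ (a:ℝ) + γ^a * β^(n-a) - 1 := by linarith [hSbound]
      _ ≤ β ^ n := hfinal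
  -- convert RHS
  have hconv : β ^ n = (Nat.factorial (k + 1) : ℝ) ^ ((n : ℝ) / ((k : ℝ) + 1)) := by
    rw [hβ]
    unfold gfun
    rw [← Real.rpow_natCast ((((k+1).factorial : ℕ) : ℝ) ^ (((k+1:ℕ) : ℝ))⁻¹) n,
      ← Real.rpow_mul (by positivity)]
    congr 1
    push_cast
    field_simp
  rw [← hconv]
  exact hchain
end

section
/- For all integers n ≥ 3 and k ≥ 2, the number of cycles in the digraph G_{n,k} equals S_{n−2} + S_n + 1 if n is odd, and S_{n−2} + S_n if n is even, where S_m is defined by S_0 = 1, S_1 = k−1, and S_m = (k−1)S_{m−1} + S_{m−2}. -/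
open scoped Classical
open Finset

set_option linter.unusedSectionVars false
set_option linter.unusedVariables false

open Fin.NatCast Fin.CommRing

namespace CycAux


lemma subme {n : ℕ} (hn : 0 < n) {a b : ℕ} (ha : a < n) (hb : b < n) :
    (a + n - b) % n = if b ≤ a then a - b else a + n - b := by
  split
  · next h =>
    have h2 : a + n - b = (a - b) + n := by omega
    rw [h2, Nat.add_mod_right, Nat.mod_eq_of_lt (by omega)]
  · next h => exact Nat.mod_eq_of_lt (by omega)

lemma mod_helper {n : ℕ} (hn : 0 < n) {a b c : ℕ} (ha : a < n) (hb : b < n) (hc : c < n) :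
    (a + n - b) % n = c ↔ a = (b + c) % n := by
  rw [subme hn ha hb]
  have h2 : (b + c) % n = if b + c < n then b + c else b + c - n := by
    split
    · exact Nat.mod_eq_of_lt ‹_›
    · rw [Nat.mod_eq_sub_mod (by omega), Nat.mod_eq_of_lt (by omega)]
  rw [h2]; split <;> split <;> omega

section FinStuff
variable {n : ℕ} [NeZero n]

lemma val_cast_lt {c : ℕ} (hc : c < n) : ((c : Fin n)).val = c := by
  rw [Fin.val_natCast]; exact Nat.mod_eq_of_lt hc

lemma add_cast_val (v : Fin n) (c : ℕ) : (v + (c : Fin n)).val = (v.val + c) % n := by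
  rw [Fin.add_def, Fin.val_natCast]
  exact Nat.add_mod_mod _ _ _

lemma shift_iff {c : ℕ} (hc : c < n) (v w : Fin n) :
    (w.val + n - v.val) % n = c ↔ w = v + (c : Fin n) := by
  rw [mod_helper (Nat.pos_of_ne_zero (NeZero.ne n)) w.isLt v.isLt hc, Fin.ext_iff,
    add_cast_val]

lemma cast_ne_zero {c : ℕ} (hc0 : 0 < c) (hcn : c < n) : (c : Fin n) ≠ 0 := by
  intro h
  have := congrArg Fin.val h
  rw [val_cast_lt hcn] at this
  simp at this; omega

lemma add_cast_ne_self {c : ℕ} (hc0 : 0 < c) (hcn : c < n) (v : Fin n) :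
    v + (c : Fin n) ≠ v := by
  intro h
  exact cast_ne_zero hc0 hcn (by
    have := left_eq_add.mp h.symm
    exact this)

end FinStuff

section Gfacts
variable {n k : ℕ} [NeZero n]

lemma G_diag (hn : 3 ≤ n) (v : Fin n) : GnkMult n k v v = 0 := by
  have h : v.val + n - v.val = n := by omega
  simp only [GnkMult, h, Nat.mod_self]
  norm_num

lemma G_val_one (hn : 3 ≤ n) (v : Fin n) :
    GnkMult n k v (v + ((1 : ℕ) : Fin n)) = k - 1 := by
  have h1 : ((v + ((1:ℕ):Fin n)).val + n - v.val) % n = 1 :=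
    (shift_iff (by omega) v _).mpr rfl
  simp only [GnkMult, h1]
  norm_num

lemma G_val_two (hn : 3 ≤ n) (v : Fin n) :
    GnkMult n k v (v + ((2 : ℕ) : Fin n)) = 1 := by
  have h2 : ((v + ((2:ℕ):Fin n)).val + n - v.val) % n = 2 :=
    (shift_iff (by omega) v _).mpr rfl
  have h1 : ¬ ((v + ((2:ℕ):Fin n)).val + n - v.val) % n = 1 := by omega
  simp only [GnkMult, h1, h2]
  norm_num

lemma G_ne_zero_iff (hn : 3 ≤ n) (hk : 2 ≤ k) (v w : Fin n) :
    GnkMult n k v w ≠ 0 ↔ (w = v + ((1:ℕ) : Fin n) ∨ w = v + ((2:ℕ) : Fin n)) := by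
  constructor
  · intro h
    by_cases h1 : (w.val + n - v.val) % n = 1
    · exact Or.inl ((shift_iff (by omega) v w).mp h1)
    · by_cases h2 : (w.val + n - v.val) % n = 2
      · exact Or.inr ((shift_iff (by omega) v w).mp h2)
      · exact absurd (by simp only [GnkMult, h1, h2, if_false]) h
  · rintro (rfl | rfl)
    · rw [G_val_one hn]; omega
    · rw [G_val_two hn]; omega

end Gfacts



/-- admissibility: no two cyclically-consecutive vertices both missing. -/
def Adm {n : ℕ} [NeZero n] (S : Finset (Fin n)) : Prop :=
  ∀ v : Fin n, v ∈ S ∨ v + ((1:ℕ) : Fin n) ∈ S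

/-- successor function of an admissible set -/
def fS {n : ℕ} [NeZero n] (S : Finset (Fin n)) (v : Fin n) : Fin n :=
  if v ∈ S then (if v + ((1:ℕ):Fin n) ∈ S then v + ((1:ℕ):Fin n) else v + ((2:ℕ):Fin n)) else v

section AdmStuff
variable {n : ℕ} [NeZero n] {S : Finset (Fin n)}

lemma Adm.succ_mem (hS : Adm S) {v : Fin n} (hv : v ∉ S) : v + ((1:ℕ):Fin n) ∈ S :=
  (hS v).resolve_left hv

lemma Adm.pred_mem (hS : Adm S) {v : Fin n} (hv : v ∉ S) : v - ((1:ℕ):Fin n) ∈ S := by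
  rcases hS (v - ((1:ℕ):Fin n)) with h | h
  · exact h
  · rw [sub_add_cancel] at h; exact absurd h hv

lemma two_cast (hn : 3 ≤ n) : ((2:ℕ) : Fin n) = ((1:ℕ):Fin n) + ((1:ℕ):Fin n) := by
  rw [← Nat.cast_add]

lemma fS_mem (hS : Adm S) {v : Fin n} (hv : v ∈ S) : fS S v ∈ S := by
  unfold fS
  rw [if_pos hv]
  split
  · assumption
  · next h =>
    rcases hS (v + ((1:ℕ):Fin n)) with h1 | h1
    · exact absurd h1 h
    · rw [add_assoc, ← Nat.cast_add] at h1
      exact h1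

lemma fS_not_mem {v : Fin n} (hv : v ∉ S) : fS S v = v := if_neg hv

lemma fS_injective (hn : 3 ≤ n) (hS : Adm S) : Function.Injective (fS S) := by
  have h1 : ((1:ℕ):Fin n) ≠ 0 := cast_ne_zero (by omega) (by omega)
  intro a b hab
  by_cases ha : a ∈ S <;> by_cases hb : b ∈ S
  · unfold fS at hab
    rw [if_pos ha, if_pos hb] at hab
    split at hab <;> split at hab
    · exact add_right_cancel hab
    · next h2 h3 =>
      exfalso
      -- a + 1 = b + 2 so b + 1 = a ∈ S but h3 : b+1 ∉ S
      apply h3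
      have : b + ((1:ℕ):Fin n) = a := by
        have := hab
        rw [show ((2:ℕ):Fin n) = ((1:ℕ):Fin n) + ((1:ℕ):Fin n) from by rw [← Nat.cast_add]] at this
        rw [← add_assoc] at this
        exact add_right_cancel this.symm
      rw [this]; exact ha
    · next h2 h3 =>
      exfalso
      apply h2
      have : a + ((1:ℕ):Fin n) = b := by
        rw [show ((2:ℕ):Fin n) = ((1:ℕ):Fin n) + ((1:ℕ):Fin n) from by rw [← Nat.cast_add]] at hab
        rw [← add_assoc] at hab
        exact add_right_cancel hab
      rw [this]; exact hb
    · exact add_right_cancel hab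
  · exfalso
    rw [fS_not_mem hb] at hab
    exact hb (hab ▸ fS_mem hS ha)
  · exfalso
    rw [fS_not_mem ha] at hab
    exact ha (hab.symm ▸ fS_mem hS hb)
  · rw [fS_not_mem ha, fS_not_mem hb] at hab; exact hab

/-- the permutation associated to an admissible set -/
noncomputable def permS (hn : 3 ≤ n) (hS : Adm S) : Equiv.Perm (Fin n) :=
  Equiv.ofBijective (fS S) (Finite.injective_iff_bijective.mp (fS_injective hn hS))

lemma permS_apply (hn : 3 ≤ n) (hS : Adm S) (v : Fin n) : permS hn hS v = fS S v := rfl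

lemma permS_support (hn : 3 ≤ n) (hS : Adm S) : (permS hn hS).support = S := by
  ext v
  rw [Equiv.Perm.mem_support, permS_apply]
  constructor
  · intro h
    by_contra hv
    exact h (fS_not_mem hv)
  · intro hv
    unfold fS
    rw [if_pos hv]
    split
    · exact add_cast_ne_self (by omega) (by omega) v
    · exact add_cast_ne_self (by omega) (by omega) v

lemma permS_reach (hn : 3 ≤ n) (hS : Adm S) :
    ∀ j : ℕ, ∀ u ∈ S, u + ((j:ℕ) : Fin n) ∈ S →
      ∃ m : ℕ, ((permS hn hS) ^ m) u = u + ((j:ℕ) : Fin n) := by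
  intro j
  induction j using Nat.strong_induction_on with
  | _ j ih =>
    match j with
    | 0 => intro u hu _; exact ⟨0, by simp⟩
    | 1 =>
      intro u hu h1
      refine ⟨1, ?_⟩
      rw [pow_one, permS_apply]
      unfold fS
      rw [if_pos hu, if_pos h1]
    | (j+2) =>
      intro u hu h2
      by_cases h1 : u + ((j+1 : ℕ) : Fin n) ∈ S
      · obtain ⟨m, hm⟩ := ih (j+1) (by omega) u hu h1
        refine ⟨m + 1, ?_⟩
        rw [pow_succ', Equiv.Perm.mul_apply, hm, permS_apply]
        unfold fS
        have he : u + ((j+1:ℕ):Fin n) + ((1:ℕ):Fin n) = u + ((j+2:ℕ):Fin n) := by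
          rw [add_assoc, ← Nat.cast_add]
        rw [if_pos h1, he, if_pos (he ▸ h2)]
      · have hj : u + ((j:ℕ) : Fin n) ∈ S := by
          rcases hS (u + ((j:ℕ):Fin n)) with h | h
          · exact h
          · rw [add_assoc, ← Nat.cast_add] at h
            exact absurd h h1
        obtain ⟨m, hm⟩ := ih j (by omega) u hu hj
        refine ⟨m + 1, ?_⟩
        rw [pow_succ', Equiv.Perm.mul_apply, hm, permS_apply]
        unfold fS
        have he1 : u + ((j:ℕ):Fin n) + ((1:ℕ):Fin n) = u + ((j+1:ℕ):Fin n) := by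
          rw [add_assoc, ← Nat.cast_add]
        have he2 : u + ((j:ℕ):Fin n) + ((2:ℕ):Fin n) = u + ((j+2:ℕ):Fin n) := by
          rw [add_assoc, ← Nat.cast_add]
        rw [if_pos hj, he1, if_neg h1, he2]

lemma Adm.nonempty (hS : Adm S) : S.Nonempty := by
  rcases hS 0 with h | h
  · exact ⟨0, h⟩
  · exact ⟨_, h⟩

lemma permS_isCycle (hn : 3 ≤ n) (hS : Adm S) : (permS hn hS).IsCycle := by
  obtain ⟨v₀, hv₀⟩ := hS.nonempty
  refine ⟨v₀, ?_, ?_⟩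
  · rw [← Equiv.Perm.mem_support, permS_support]; exact hv₀
  · intro y hy
    have hyS : y ∈ S := by
      rw [← permS_support hn hS]; exact Equiv.Perm.mem_support.mpr hy
    have hcast : v₀ + (((y - v₀).val : ℕ) : Fin n) = y := by
      rw [Fin.cast_val_eq_self]; ring
    obtain ⟨m, hm⟩ := permS_reach hn hS (y - v₀).val v₀ hv₀ (by rw [hcast]; exact hyS)
    exact ⟨m, by rw [zpow_natCast, hm, hcast]⟩

end AdmStuff


lemma cross_iff {n : ℕ} (hn : 0 < n) {a γ s : ℕ} (ha : a < n) (hγ : γ < n) :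
    (γ + n - a) % n < s ↔ n ≤ (a + n - (γ + 1) % n) % n + s := by
  rcases lt_or_ge (γ + 1) n with h | h
  · have hcc : (γ + 1) % n = γ + 1 := Nat.mod_eq_of_lt h
    rw [hcc, subme hn hγ ha, subme hn ha h]
    split_ifs <;> omega
  · have hγ1 : γ + 1 = n := by omega
    have hcc : (γ + 1) % n = 0 := by rw [hγ1, Nat.mod_self]
    rw [hcc, subme hn hγ ha, subme hn ha hn]
    split_ifs <;> omega

lemma dstep {n : ℕ} (hn : 0 < n) {a s cc : ℕ} (ha : a < n) (hcc : cc < n)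
    (h : (a + n - cc) % n + s < n) :
    ((a + s) % n + n - cc) % n = (a + n - cc) % n + s := by
  have h1 := subme hn ha hcc
  rcases lt_or_ge (a + s) n with h2 | h2
  · rw [Nat.mod_eq_of_lt h2, subme hn h2 hcc]
    rw [h1] at h ⊢
    split_ifs at * <;> omega
  · have hs : s < n := by rw [h1] at h; split_ifs at h <;> omega
    have h3 : (a + s) % n = a + s - n := by
      rw [Nat.mod_eq_sub_mod h2, Nat.mod_eq_of_lt (by omega)]
    rw [h3, subme hn (by omega) hcc]
    rw [h1] at h ⊢
    split_ifs at * <;> omega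

lemma sum_apply_support {n : ℕ} {M : Type*} [AddCommMonoid M]
    (σ : Equiv.Perm (Fin n)) (f : Fin n → M) :
    ∑ v ∈ σ.support, f (σ v) = ∑ v ∈ σ.support, f v :=
  Finset.sum_equiv σ (fun i => (Equiv.Perm.apply_mem_support (x := i)).symm)
    (fun i _ => rfl)


section Classify
variable {n : ℕ} [NeZero n]

/-- step of σ at v -/
def stp (σ : Equiv.Perm (Fin n)) (v : Fin n) : ℕ := ((σ v).val + n - v.val) % n

lemma stp_lt (hn : 0 < n) (σ : Equiv.Perm (Fin n)) (v : Fin n) : stp σ v < n :=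
  Nat.mod_lt _ hn

lemma stp_eq_iff {c : ℕ} (hc : c < n) (σ : Equiv.Perm (Fin n)) (v : Fin n) :
    stp σ v = c ↔ σ v = v + (c : Fin n) := shift_iff hc v (σ v)

theorem classify {k : ℕ} (hn : 3 ≤ n) (σ : Equiv.Perm (Fin n))
    (hc : σ.IsCycle)
    (hg : ∀ v ∈ σ.support, σ v = v + ((1:ℕ):Fin n) ∨ σ v = v + ((2:ℕ):Fin n)) :
    (∃ (hS : Adm σ.support), σ = permS hn hS) ∨
      (Odd n ∧ ∀ v, σ v = v + ((2:ℕ):Fin n)) := by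
  have npos : 0 < n := by omega
  set S := σ.support with hSdef
  have hst : ∀ v ∈ S, stp σ v = 1 ∨ stp σ v = 2 := by
    intro v hv
    rcases hg v hv with h | h
    · exact Or.inl ((stp_eq_iff (by omega) σ v).mpr h)
    · exact Or.inr ((stp_eq_iff (by omega) σ v).mpr h)
  have hSne : S.Nonempty := by
    obtain ⟨x, hx, -⟩ := hc
    exact ⟨x, Equiv.Perm.mem_support.mpr hx⟩
  have hcard : S.card ≤ n := by
    simpa using Finset.card_le_univ S
  -- divisibility of the total step
  have hdvd : n ∣ ∑ v ∈ S, stp σ v := by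
    have hcast : ((∑ v ∈ S, stp σ v : ℕ) : ZMod n) = 0 := by
      push_cast
      have h1 : ∀ v ∈ S, ((stp σ v : ℕ) : ZMod n) = ((σ v).val : ZMod n) - (v.val : ZMod n) := by
        intro v hv
        unfold stp
        rw [ZMod.natCast_mod, Nat.cast_sub (by omega)]
        push_cast
        rw [ZMod.natCast_self]
        ring
      rw [Finset.sum_congr rfl h1, Finset.sum_sub_distrib,
        sum_apply_support σ (fun v => ((v.val : ZMod n)))]
      ring
    exact (ZMod.natCast_eq_zero_iff _ _).mp hcast
  have hlow : S.card ≤ ∑ v ∈ S, stp σ v := by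
    calc S.card = ∑ _v ∈ S, 1 := by simp
    _ ≤ ∑ v ∈ S, stp σ v := Finset.sum_le_sum (fun v hv => by rcases hst v hv with h|h <;> omega)
  have hhigh : ∑ v ∈ S, stp σ v ≤ 2 * S.card := by
    calc ∑ v ∈ S, stp σ v ≤ ∑ _v ∈ S, 2 :=
        Finset.sum_le_sum (fun v hv => by rcases hst v hv with h|h <;> omega)
    _ = 2 * S.card := by rw [Finset.sum_const]; ring
  have hsum : ∑ v ∈ S, stp σ v = n ∨ ∑ v ∈ S, stp σ v = 2 * n := by
    obtain ⟨w, hw⟩ := hdvd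
    have hcpos := hSne.card_pos
    have hw2 : w ≤ 2 := by nlinarith
    interval_cases w <;> omega
  rcases hsum with hSig | hSig
  · -- winding number 1 : σ comes from an admissible set
    left
    -- crossing counts
    set cross : Fin n → Fin n → Prop := fun u c => (c.val + n - u.val) % n < stp σ u with hcrossdef
    have hcross_ge1 : ∀ c : Fin n, ∃ u ∈ S, cross u c := by
      intro c
      by_contra hcon
      push_neg at hcon
      set cc : ℕ := (c.val + 1) % n with hccdef
      have hccn : cc < n := Nat.mod_lt _ npos
      set d : Fin n → ℕ := fun u => (u.val + n - cc) % n with hddef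
      have hstep : ∀ u ∈ S, d (σ u) = d u + stp σ u := by
        intro u hu
        have hncross : ¬ ((c.val + n - u.val) % n < stp σ u) := hcon u hu
        have hlt : (u.val + n - cc) % n + stp σ u < n := by
          by_contra hge
          push_neg at hge
          rw [hccdef] at hge
          exact hncross ((cross_iff npos u.isLt c.isLt).mpr hge)
        have hval : (σ u).val = (u.val + stp σ u) % n :=
          (mod_helper npos (σ u).isLt u.isLt (stp_lt npos σ u)).mp rfl
        show ((σ u).val + n - cc) % n = (u.val + n - cc) % n + stp σ u
        rw [hval]
        exact dstep npos u.isLt hccn hlt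
      have hsum2 : ∑ u ∈ S, d (σ u) = ∑ u ∈ S, d u := sum_apply_support σ d
      rw [Finset.sum_congr rfl hstep, Finset.sum_add_distrib, hSig] at hsum2
      omega
    set cnt : Fin n → ℕ := fun c => (S.filter (fun u => cross u c)).card with hcntdef
    have hcnt1 : ∀ c, 1 ≤ cnt c := by
      intro c
      obtain ⟨u, hu, hcu⟩ := hcross_ge1 c
      exact Finset.card_pos.mpr ⟨u, Finset.mem_filter.mpr ⟨hu, hcu⟩⟩
    have hinner : ∀ u ∈ S, (univ.filter (fun c => cross u c)).card = stp σ u := by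
      intro u hu
      have h1 : ∀ c : Fin n, cross u c ↔ (c - u).val < stp σ u := by
        intro c
        rw [hcrossdef]
        simp only
        rw [Fin.sub_def]
        simp only
        have : c.val + n - u.val = n - u.val + c.val := by omega
        rw [this]
      have h2 : (univ.filter (fun c => cross u c)).card
          = (univ.filter (fun e : Fin n => e.val < stp σ u)).card := by
        apply Finset.card_bij (fun c _ => c - u)
        · intro c hcc
          rw [Finset.mem_filter] at hcc ⊢
          exact ⟨Finset.mem_univ _, (h1 c).mp hcc.2⟩
        · intro c1 h1' c2 h2' he
          exact sub_left_injective he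
        · intro e he
          rw [Finset.mem_filter] at he
          refine ⟨e + u, Finset.mem_filter.mpr ⟨Finset.mem_univ _, ?_⟩, by ring⟩
          rw [h1]
          simpa using he.2
      rw [h2]
      have h3 : (univ.filter (fun e : Fin n => e.val < stp σ u)).card
          = (Finset.range (stp σ u)).card := by
        apply Finset.card_bij (fun e _ => e.val)
        · intro e hee
          rw [Finset.mem_filter] at hee
          exact Finset.mem_range.mpr hee.2
        · intro e1 h1' e2 h2' he
          exact Fin.ext he
        · intro i hi
          rw [Finset.mem_range] at hi
          refine ⟨⟨i, lt_trans hi (stp_lt npos σ u)⟩, Finset.mem_filter.mpr ⟨Finset.mem_univ _, hi⟩, rfl⟩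
      rw [h3, Finset.card_range]
    have hcnt_sum : ∑ c : Fin n, cnt c = n := by
      have h1 : ∀ c : Fin n, cnt c = ∑ u ∈ S, if cross u c then 1 else 0 := by
        intro c
        rw [hcntdef]
        simp only
        rw [Finset.card_filter]
      rw [Finset.sum_congr rfl (fun c _ => h1 c), Finset.sum_comm]
      have h2 : ∀ u ∈ S, (∑ c : Fin n, if cross u c then 1 else 0) = stp σ u := by
        intro u hu
        rw [← Finset.card_filter]
        exact hinner u hu
      rw [Finset.sum_congr rfl h2, hSig]
    have hcnt_eq1 : ∀ c, cnt c = 1 := by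
      by_contra hcon
      push_neg at hcon
      obtain ⟨c₀, hc₀⟩ := hcon
      have hgt : (1:ℕ) < cnt c₀ := by
        have := hcnt1 c₀; omega
      have : ∑ _c : Fin n, (1:ℕ) < ∑ c : Fin n, cnt c :=
        Finset.sum_lt_sum (fun c _ => hcnt1 c) ⟨c₀, Finset.mem_univ _, hgt⟩
      simp at this
      omega
    have huniq : ∀ c : Fin n, ∀ u ∈ S, cross u c → ∀ u' ∈ S, cross u' c → u = u' := by
      intro c u hu hcu u' hu' hcu'
      obtain ⟨a, ha⟩ := Finset.card_eq_one.mp (hcnt_eq1 c)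
      have h1 : u ∈ S.filter (fun v => cross v c) := Finset.mem_filter.mpr ⟨hu, hcu⟩
      have h2 : u' ∈ S.filter (fun v => cross v c) := Finset.mem_filter.mpr ⟨hu', hcu'⟩
      rw [ha, Finset.mem_singleton] at h1 h2
      rw [h1, h2]
    -- admissibility
    have hone_ne : ((1:ℕ):Fin n) ≠ 0 := cast_ne_zero (by omega) (by omega)
    have hAdm : Adm S := by
      intro v
      by_contra hcon
      push_neg at hcon
      obtain ⟨hv, hv1⟩ := hcon
      obtain ⟨u, hu, hcu⟩ := hcross_ge1 v
      have hcu' : (v.val + n - u.val) % n < stp σ u := hcu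
      have hstpu := hst u hu
      have hr01 : (v.val + n - u.val) % n = 0 ∨ (v.val + n - u.val) % n = 1 := by omega
      rcases hr01 with hr | hr
      · -- v = u
        have hveq : v = u + ((0:ℕ) : Fin n) := (shift_iff npos u v).mp hr
        simp only [Nat.cast_zero, add_zero] at hveq
        exact hv (hveq ▸ hu)
      · -- v = u + 1, stp u = 2 so σ u = v + 1 ∈ S, contradiction
        have hstp2 : stp σ u = 2 := by omega
        have hvu : v = u + ((1:ℕ) : Fin n) := (shift_iff (by omega) u v).mp hr
        have hσu : σ u = u + ((2:ℕ):Fin n) := (stp_eq_iff (by omega) σ u).mp hstp2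
        have hmem : σ u ∈ S := by
          rw [hSdef]
          exact Equiv.Perm.apply_mem_support.mpr hu
        apply hv1
        have : u + ((2:ℕ):Fin n) = v + ((1:ℕ):Fin n) := by
          rw [hvu, two_cast hn]; ring
        rw [← this]
        exact hσu ▸ hmem
    refine ⟨hAdm, ?_⟩
    -- σ agrees with permS
    have hsucc : ∀ v ∈ S, v + ((1:ℕ):Fin n) ∈ S → σ v = v + ((1:ℕ):Fin n) := by
      intro v hv hv1
      set u₂ := σ.symm (v + ((1:ℕ):Fin n)) with hu₂def
      have hσu₂ : σ u₂ = v + ((1:ℕ):Fin n) := Equiv.apply_symm_apply σ _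
      have hu₂S : u₂ ∈ S := by
        by_contra h
        have : σ u₂ = u₂ := Equiv.Perm.notMem_support.mp (by rwa [← hSdef])
        rw [this] at hσu₂
        exact h (hσu₂ ▸ hv1)
      rcases hg u₂ hu₂S with h | h
      · have : u₂ = v := by
          rw [h] at hσu₂
          exact add_right_cancel hσu₂
        rw [← this, h, this]
      · exfalso
        have hu₂v : u₂ = v - ((1:ℕ):Fin n) := by
          rw [h] at hσu₂
          rw [two_cast hn] at hσu₂
          have : u₂ + ((1:ℕ):Fin n) + ((1:ℕ):Fin n) = v + ((1:ℕ):Fin n) := by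
            rw [← hσu₂]; ring
          have h2 := add_right_cancel this
          rw [← h2]; ring
        have hstp2 : stp σ u₂ = 2 := (stp_eq_iff (by omega) σ u₂).mpr h
        have hcross1 : cross u₂ v := by
          rw [hcrossdef]
          simp only
          have : (v.val + n - u₂.val) % n = 1 := by
            rw [shift_iff (by omega : (1:ℕ) < n) u₂ v, hu₂v]
            ring
          omega
        have hcross2 : cross v v := by
          rw [hcrossdef]
          simp only
          have h0 : (v.val + n - v.val) % n = 0 := by
            have : v.val + n - v.val = n := by omega
            rw [this, Nat.mod_self]
          have := hst v hv
          omega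
        have := huniq v u₂ hu₂S hcross1 v hv hcross2
        rw [hu₂v] at this
        have h1 : ((1:ℕ):Fin n) = 0 := by
          have := sub_eq_self.mp this
          exact this
        exact hone_ne h1
    apply Equiv.ext
    intro v
    rw [permS_apply]
    unfold fS
    by_cases hv : v ∈ S
    · rw [if_pos hv]
      by_cases hv1 : v + ((1:ℕ):Fin n) ∈ S
      · rw [if_pos hv1]
        exact hsucc v hv hv1
      · rw [if_neg hv1]
        rcases hg v hv with h | h
        · exfalso
          apply hv1
          rw [← h, hSdef]
          exact Equiv.Perm.apply_mem_support.mpr hv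
        · exact h
    · rw [if_neg hv]
      exact Equiv.Perm.notMem_support.mp (by rwa [← hSdef])
  · -- winding number 2 : σ = +2 everywhere and n is odd
    right
    have hcard_n : S.card = n := by omega
    have hSuniv : S = univ := Finset.eq_univ_of_card S (by simpa using hcard_n)
    have hall : ∀ v, stp σ v = 2 := by
      by_contra hcon
      push_neg at hcon
      obtain ⟨v₀, hv₀⟩ := hcon
      have hv₀S : v₀ ∈ S := hSuniv ▸ Finset.mem_univ v₀
      have hlt : stp σ v₀ < 2 := by
        rcases hst v₀ hv₀S with h|h <;> omega
      have : ∑ v ∈ S, stp σ v < ∑ _v ∈ S, 2 :=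
        Finset.sum_lt_sum (fun v hv => by rcases hst v hv with h|h <;> omega)
          ⟨v₀, hv₀S, hlt⟩
      rw [Finset.sum_const, hcard_n] at this
      simp at this
      omega
    have hσ2 : ∀ v, σ v = v + ((2:ℕ):Fin n) :=
      fun v => (stp_eq_iff (by omega) σ v).mp (hall v)
    refine ⟨?_, hσ2⟩
    -- n must be odd
    by_contra hodd
    rw [Nat.not_odd_iff_even] at hodd
    obtain ⟨t, ht⟩ := hodd
    have hmoved : ∀ v : Fin n, σ v ≠ v := by
      intro v
      rw [hσ2 v]
      exact add_cast_ne_self (by omega) (by omega) v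
    obtain ⟨i, hi⟩ := hc.exists_pow_eq (hmoved 0) (hmoved ((1:ℕ):Fin n))
    have hpar : ∀ m : ℕ, ((σ ^ m) (0 : Fin n)).val % 2 = 0 := by
      intro m
      induction m with
      | zero => simp
      | succ m ih =>
        rw [pow_succ', Equiv.Perm.mul_apply, hσ2]
        set x := (σ ^ m) (0 : Fin n)
        rw [add_cast_val]
        have hx := x.isLt
        rcases lt_or_ge (x.val + 2) n with h | h
        · rw [Nat.mod_eq_of_lt h]; omega
        · have h2 : x.val + 2 - n < n := by omega
          rw [Nat.mod_eq_sub_mod h, Nat.mod_eq_of_lt h2]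
          omega
    have h1 : (((1:ℕ):Fin n)).val = 1 := val_cast_lt (by omega)
    have := hpar i
    rw [hi, h1] at this
    omega

end Classify
section Perm2
variable {n : ℕ} [NeZero n]

noncomputable def perm2 (n : ℕ) [NeZero n] : Equiv.Perm (Fin n) :=
  Equiv.addRight ((2:ℕ) : Fin n)

lemma perm2_apply (v : Fin n) : perm2 n v = v + ((2:ℕ):Fin n) := rfl

lemma perm2_support (hn : 3 ≤ n) : (perm2 n).support = univ := by
  ext v
  simp only [Equiv.Perm.mem_support, Finset.mem_univ, iff_true, perm2_apply]
  exact add_cast_ne_self (by omega) (by omega) v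

lemma perm2_pow (m : ℕ) (v : Fin n) : ((perm2 n) ^ m) v = v + ((2*m : ℕ) : Fin n) := by
  induction m with
  | zero => simp
  | succ m ih =>
    rw [pow_succ', Equiv.Perm.mul_apply, ih, perm2_apply, add_assoc, ← Nat.cast_add,
      show (2:ℕ)*m + 2 = 2*(m+1) by ring]

lemma perm2_isCycle (hn : 3 ≤ n) (hodd : Odd n) : (perm2 n).IsCycle := by
  have hmoved : ∀ v : Fin n, perm2 n v ≠ v := fun v =>
    add_cast_ne_self (by omega) (by omega) v
  refine ⟨0, hmoved 0, ?_⟩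
  intro y _
  set j := y.val with hj
  have hy : ((j : ℕ) : Fin n) = y := Fin.cast_val_eq_self y
  rcases Nat.even_or_odd j with ⟨t, ht⟩ | ⟨t, ht⟩
  · refine ⟨(t : ℤ), ?_⟩
    rw [zpow_natCast, perm2_pow]
    rw [show 2 * t = j by omega, hy, zero_add]
  · obtain ⟨s, hs⟩ := hodd
    refine ⟨((t + s + 1 : ℕ) : ℤ), ?_⟩
    rw [zpow_natCast, perm2_pow, zero_add]
    have h2 : 2 * (t + s + 1) = j + n := by omega
    rw [h2, Nat.cast_add, Fin.natCast_self, add_zero, hy]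

end Perm2

section Weights
variable {n k : ℕ} [NeZero n]

lemma weight_permS (hn : 3 ≤ n) {S : Finset (Fin n)} (hS : Adm S) :
    (∏ v ∈ (permS hn hS).support, GnkMult n k v ((permS hn hS) v))
      = (k-1) ^ (S.filter (fun v => v + ((1:ℕ):Fin n) ∈ S)).card := by
  rw [permS_support hn hS]
  have h1 : ∀ v ∈ S, GnkMult n k v ((permS hn hS) v)
      = if v + ((1:ℕ):Fin n) ∈ S then k - 1 else 1 := by
    intro v hv
    rw [permS_apply]
    unfold fS
    rw [if_pos hv]
    split
    · next h => exact G_val_one hn v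
    · next h => exact G_val_two hn v
  rw [Finset.prod_congr rfl h1, Finset.prod_ite, Finset.prod_const, Finset.prod_const_one,
    mul_one]

lemma weight_perm2 (hn : 3 ≤ n) :
    (∏ v ∈ (perm2 n).support, GnkMult n k v ((perm2 n) v)) = 1 := by
  rw [perm2_support hn]
  apply Finset.prod_eq_one
  intro v _
  rw [perm2_apply, G_val_two hn]

lemma perm2_ne_permS (hn : 3 ≤ n) {S : Finset (Fin n)} (hS : Adm S) :
    perm2 n ≠ permS hn hS := by
  intro h
  have hsupp : S = univ := by
    rw [← permS_support hn hS, ← h, perm2_support hn]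
  have h0 : perm2 n 0 = permS hn hS 0 := by rw [h]
  rw [perm2_apply, permS_apply] at h0
  unfold fS at h0
  rw [if_pos (hsupp ▸ Finset.mem_univ _), if_pos (hsupp ▸ Finset.mem_univ _)] at h0
  have := congrArg Fin.val h0
  rw [zero_add, zero_add, val_cast_lt (show 2 < n by omega),
    val_cast_lt (show 1 < n by omega)] at this
  omega

end Weights
section MainSum
variable {n k : ℕ} [NeZero n]

theorem cycle_sum (hn : 3 ≤ n) (hk : 2 ≤ k) :
    ∑ σ : Equiv.Perm (Fin n),
        (if σ.IsCycle then ∏ v ∈ σ.support, GnkMult n k v (σ v) else 0)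
      = (∑ S : Finset (Fin n), if Adm S
            then (k-1) ^ (S.filter (fun v => v + ((1:ℕ):Fin n) ∈ S)).card else 0)
        + (if Odd n then 1 else 0) := by
  classical
  set W : Equiv.Perm (Fin n) → ℕ := fun σ => ∏ v ∈ σ.support, GnkMult n k v (σ v) with hW
  set A : Finset (Finset (Fin n)) := univ.filter (fun S => Adm S) with hA
  set permOf : Finset (Fin n) → Equiv.Perm (Fin n) :=
    fun S => if h : Adm S then permS hn h else 1 with hpermOf
  have hpermOf_eq : ∀ S (h : Adm S), permOf S = permS hn h := by
    intro S h
    rw [hpermOf]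
    simp only [dif_pos h]
  have hLHS : (∑ σ : Equiv.Perm (Fin n),
      (if σ.IsCycle then ∏ v ∈ σ.support, GnkMult n k v (σ v) else 0))
      = ∑ σ ∈ univ.filter (fun σ : Equiv.Perm (Fin n) => σ.IsCycle), W σ :=
    (Finset.sum_filter _ _).symm
  set C : Finset (Equiv.Perm (Fin n)) :=
    univ.filter (fun σ => σ.IsCycle ∧ W σ ≠ 0) with hC
  have hstep1 : ∑ σ ∈ univ.filter (fun σ : Equiv.Perm (Fin n) => σ.IsCycle), W σ
      = ∑ σ ∈ C, W σ := by
    apply (Finset.sum_subset ?_ ?_).symm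
    · intro σ hσ
      rw [hC, Finset.mem_filter] at hσ
      exact Finset.mem_filter.mpr ⟨Finset.mem_univ _, hσ.2.1⟩
    · intro σ hσ hσC
      rw [Finset.mem_filter] at hσ
      by_contra hne
      exact hσC (Finset.mem_filter.mpr ⟨Finset.mem_univ _, hσ.2, hne⟩)
  have hCeq : C = if Odd n then insert (perm2 n) (A.image permOf) else A.image permOf := by
    ext σ
    rw [hC, Finset.mem_filter]
    constructor
    · rintro ⟨-, hcyc, hWne⟩
      have hg : ∀ v ∈ σ.support, σ v = v + ((1:ℕ):Fin n) ∨ σ v = v + ((2:ℕ):Fin n) := by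
        intro v hv
        have := Finset.prod_ne_zero_iff.mp hWne v hv
        exact (G_ne_zero_iff hn hk v (σ v)).mp this
      rcases classify (k := k) hn σ hcyc hg with ⟨hS, hσ⟩ | ⟨hodd, hall⟩
      · have hmem : σ ∈ A.image permOf := by
          apply Finset.mem_image.mpr
          refine ⟨σ.support, Finset.mem_filter.mpr ⟨Finset.mem_univ _, hS⟩, ?_⟩
          rw [hpermOf_eq _ hS, ← hσ]
        split <;> [exact Finset.mem_insert_of_mem hmem; exact hmem]
      · have hσ2 : σ = perm2 n := Equiv.ext (fun v => by rw [hall v, perm2_apply])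
        rw [if_pos hodd, hσ2]
        exact Finset.mem_insert_self _ _
    · intro hmem
      have himg : ∀ τ ∈ A.image permOf, τ.IsCycle ∧ W τ ≠ 0 := by
        intro τ hτ
        obtain ⟨S, hSA, hτeq⟩ := Finset.mem_image.mp hτ
        have hS : Adm S := (Finset.mem_filter.mp hSA).2
        rw [← hτeq, hpermOf_eq _ hS]
        refine ⟨permS_isCycle hn hS, ?_⟩
        rw [hW]
        simp only
        rw [weight_permS hn hS]
        exact pow_ne_zero _ (by omega)
      split at hmem
      · next hodd =>
        rcases Finset.mem_insert.mp hmem with h | h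
        · subst h
          refine ⟨Finset.mem_univ _, perm2_isCycle hn hodd, ?_⟩
          rw [hW]
          simp only
          rw [weight_perm2 hn]
          omega
        · exact ⟨Finset.mem_univ _, himg σ h⟩
      · exact ⟨Finset.mem_univ _, himg σ hmem⟩
  have hinj : ∀ S ∈ A, ∀ S' ∈ A, permOf S = permOf S' → S = S' := by
    intro S hS S' hS' heq
    have h1 : Adm S := (Finset.mem_filter.mp hS).2
    have h2 : Adm S' := (Finset.mem_filter.mp hS').2
    rw [hpermOf_eq _ h1, hpermOf_eq _ h2] at heq
    rw [← permS_support hn h1, ← permS_support hn h2, heq]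
  have himg_sum : ∑ σ ∈ A.image permOf, W σ
      = ∑ S : Finset (Fin n), if Adm S
          then (k-1) ^ (S.filter (fun v => v + ((1:ℕ):Fin n) ∈ S)).card else 0 := by
    rw [Finset.sum_image hinj]
    rw [← Finset.sum_filter]
    apply Finset.sum_congr rfl
    intro S hS
    have h1 : Adm S := (Finset.mem_filter.mp hS).2
    rw [hpermOf_eq _ h1, hW]
    simp only
    rw [weight_permS hn h1]
  have hperm2_not_mem : perm2 n ∉ A.image permOf := by
    intro h
    obtain ⟨S, hSA, hτeq⟩ := Finset.mem_image.mp h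
    have hS : Adm S := (Finset.mem_filter.mp hSA).2
    rw [hpermOf_eq _ hS] at hτeq
    exact perm2_ne_permS hn hS hτeq.symm
  rw [hLHS, hstep1, hCeq]
  by_cases hodd : Odd n
  · rw [if_pos hodd, if_pos hodd, Finset.sum_insert hperm2_not_mem, himg_sum]
    have : W (perm2 n) = 1 := by
      rw [hW]; simp only; rw [weight_perm2 hn]
    rw [this]
    ring
  · rw [if_neg hodd, if_neg hodd, himg_sum, add_zero]

end MainSum
section LinCount

def lgood (m : ℕ) (B : Finset ℕ) : Prop :=
  0 ∈ B ∧ m - 1 ∈ B ∧ ∀ i, i + 1 < m → (i ∈ B ∨ i + 1 ∈ B)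

def lwt (m : ℕ) (B : Finset ℕ) : ℕ :=
  ((range (m-1)).filter (fun i => i ∈ B ∧ i + 1 ∈ B)).card

noncomputable def Qs (x m : ℕ) : ℕ :=
  ∑ B ∈ (range m).powerset, if lgood m B then x ^ lwt m B else 0

lemma mem_lG {j : ℕ} {B : Finset ℕ} :
    B ∈ (range j).powerset.filter (lgood j) ↔ B ⊆ range j ∧ lgood j B := by
  rw [Finset.mem_filter, Finset.mem_powerset]

lemma Qs_one (x : ℕ) : Qs x 1 = 1 := by
  unfold Qs
  rw [Finset.sum_eq_single_of_mem ({0} : Finset ℕ)]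
  · rw [if_pos]
    · simp [lwt]
    · refine ⟨by simp, by simp, fun i h => by omega⟩
  · rw [Finset.mem_powerset, Finset.range_one]
  · intro B hB hne
    rw [Finset.mem_powerset, Finset.range_one] at hB
    rw [if_neg]
    intro hg
    apply hne
    apply Finset.Subset.antisymm hB
    intro b hb
    rw [Finset.mem_singleton] at hb
    rw [hb]
    exact hg.1

lemma Qs_two (x : ℕ) : Qs x 2 = x := by
  unfold Qs
  rw [Finset.sum_eq_single_of_mem ({0, 1} : Finset ℕ)]
  · rw [if_pos]
    · have h : lwt 2 {0, 1} = 1 := by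
        unfold lwt
        rw [show (2:ℕ) - 1 = 1 from rfl, Finset.range_one]
        rw [Finset.filter_singleton, if_pos (by simp)]
        rfl
      rw [h, pow_one]
    · refine ⟨by simp, by simp, fun i h => by
        left
        have hi : i = 0 := by omega
        rw [hi]
        simp⟩
  · rw [Finset.mem_powerset]
    intro b hb
    simp only [Finset.mem_insert, Finset.mem_singleton] at hb
    rcases hb with h | h <;> simp [h]
  · intro B hB hne
    rw [Finset.mem_powerset] at hB
    rw [if_neg]
    intro hg
    apply hne
    apply Finset.Subset.antisymm
    · intro b hb
      have hb2 := hB hb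
      rw [Finset.mem_range] at hb2
      interval_cases b <;> simp
    · intro b hb
      simp only [Finset.mem_insert, Finset.mem_singleton] at hb
      rcases hb with h | h
      · rw [h]; exact hg.1
      · rw [h]; exact hg.2.1

lemma Qs_rec (x m : ℕ) : Qs x (m + 2) = x * Qs x (m + 1) + Qs x m := by
  have hQ : ∀ j, Qs x j = ∑ B ∈ (range j).powerset.filter (lgood j), x ^ lwt j B := by
    intro j
    unfold Qs
    rw [Finset.sum_filter]
  rw [hQ, hQ, hQ]
  rw [← Finset.sum_filter_add_sum_filter_not
      ((range (m+2)).powerset.filter (lgood (m+2))) (fun B => m ∈ B)]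
  have claim1 : ∑ B ∈ ((range (m+2)).powerset.filter (lgood (m+2))).filter (fun B => m ∈ B),
      x ^ lwt (m+2) B
      = x * ∑ B ∈ (range (m+1)).powerset.filter (lgood (m+1)), x ^ lwt (m+1) B := by
    rw [Finset.mul_sum]
    refine Finset.sum_bij' (i := fun B (_ : B ∈ _) => B.erase (m+1))
      (j := fun B' (_ : B' ∈ _) => insert (m+1) B') ?hi ?hj ?left ?right ?hw
    case hi =>
      intro B hB
      rw [Finset.mem_filter, mem_lG] at hB
      obtain ⟨⟨hsub, hg⟩, hm⟩ := hB
      rw [mem_lG]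
      refine ⟨?_, ?_, ?_, ?_⟩
      · intro b hb
        rw [Finset.mem_erase] at hb
        have hb2 := hsub hb.2
        rw [Finset.mem_range] at hb2 ⊢
        omega
      · rw [Finset.mem_erase]
        exact ⟨by omega, hg.1⟩
      · rw [show m + 1 - 1 = m from rfl, Finset.mem_erase]
        exact ⟨by omega, hm⟩
      · intro i hi
        rcases hg.2.2 i (by omega) with h | h
        · left; rw [Finset.mem_erase]; exact ⟨by omega, h⟩
        · right; rw [Finset.mem_erase]; exact ⟨by omega, h⟩
    case hj =>
      intro B' hB'
      rw [mem_lG] at hB'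
      obtain ⟨hsub, hg⟩ := hB'
      have hmB' : m ∈ B' := by
        have h := hg.2.1; rwa [show m+1-1 = m from rfl] at h
      rw [Finset.mem_filter, mem_lG]
      refine ⟨⟨?_, ?_, ?_, ?_⟩, ?_⟩
      · intro b hb
        rw [Finset.mem_insert] at hb
        rcases hb with h | h
        · rw [h, Finset.mem_range]; omega
        · have h2 := hsub h; rw [Finset.mem_range] at h2 ⊢; omega
      · exact Finset.mem_insert_of_mem hg.1
      · rw [show m + 2 - 1 = m + 1 from rfl]
        exact Finset.mem_insert_self _ _
      · intro i hi
        rcases Nat.lt_or_ge (i+1) (m+1) with h | h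
        · rcases hg.2.2 i h with h' | h'
          · exact Or.inl (Finset.mem_insert_of_mem h')
          · exact Or.inr (Finset.mem_insert_of_mem h')
        · have h2 : i + 1 = m + 1 := by omega
          rw [h2]
          exact Or.inr (Finset.mem_insert_self _ _)
      · exact Finset.mem_insert_of_mem hmB'
    case left =>
      intro B hB
      rw [Finset.mem_filter, mem_lG] at hB
      apply Finset.insert_erase
      have h := hB.1.2.2.1
      rwa [show m + 2 - 1 = m + 1 from rfl] at h
    case right =>
      intro B' hB'
      rw [mem_lG] at hB'
      apply Finset.erase_insert
      intro h
      have h2 := hB'.1 h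
      rw [Finset.mem_range] at h2
      omega
    case hw =>
      intro B hB
      rw [Finset.mem_filter, mem_lG] at hB
      obtain ⟨⟨hsub, hg⟩, hm⟩ := hB
      have hm1B : m + 1 ∈ B := by
        have h := hg.2.1; rwa [show m + 2 - 1 = m + 1 from rfl] at h
      have hwt : lwt (m+2) B = lwt (m+1) (B.erase (m+1)) + 1 := by
        unfold lwt
        rw [show m + 2 - 1 = m + 1 from rfl, show m + 1 - 1 = m from rfl]
        rw [Finset.range_add_one, Finset.filter_insert, if_pos ⟨hm, hm1B⟩]
        rw [Finset.card_insert_of_notMem (by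
          intro h; exact absurd (Finset.mem_of_mem_filter _ h) (by simp))]
        have hfe : (range m).filter (fun i => i ∈ B ∧ i + 1 ∈ B)
            = (range m).filter (fun i => i ∈ B.erase (m+1) ∧ i + 1 ∈ B.erase (m+1)) := by
          apply Finset.filter_congr
          intro i hi
          rw [Finset.mem_range] at hi
          simp only [Finset.mem_erase, eq_iff_iff]
          constructor
          · rintro ⟨h1, h2⟩
            exact ⟨⟨by omega, h1⟩, ⟨by omega, h2⟩⟩
          · rintro ⟨⟨_, h1⟩, ⟨_, h2⟩⟩
            exact ⟨h1, h2⟩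
        rw [hfe]
      rw [hwt, pow_succ]
      ring
  have claim2 : ∑ B ∈ ((range (m+2)).powerset.filter (lgood (m+2))).filter (fun B => m ∉ B),
      x ^ lwt (m+2) B
      = ∑ B ∈ (range m).powerset.filter (lgood m), x ^ lwt m B := by
    refine Finset.sum_bij' (i := fun B (_ : B ∈ _) => B.erase (m+1))
      (j := fun B' (_ : B' ∈ _) => insert (m+1) B') ?hi ?hj ?left ?right ?hw
    case hi =>
      intro B hB
      rw [Finset.mem_filter, mem_lG] at hB
      obtain ⟨⟨hsub, hg⟩, hm⟩ := hB
      have hm0 : 0 < m := by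
        rcases Nat.eq_zero_or_pos m with h | h
        · exact absurd (h ▸ hg.1) hm
        · exact h
      have hm1B : m - 1 ∈ B := by
        rcases hg.2.2 (m-1) (by omega) with h | h
        · exact h
        · rw [show m - 1 + 1 = m by omega] at h
          exact absurd h hm
      rw [mem_lG]
      refine ⟨?_, ?_, ?_, ?_⟩
      · intro b hb
        rw [Finset.mem_erase] at hb
        have h1 := hsub hb.2
        rw [Finset.mem_range] at h1 ⊢
        have h2 : b ≠ m := fun h => hm (h ▸ hb.2)
        omega
      · rw [Finset.mem_erase]; exact ⟨by omega, hg.1⟩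
      · rw [Finset.mem_erase]; exact ⟨by omega, hm1B⟩
      · intro i hi
        rcases hg.2.2 i (by omega) with h | h
        · left; rw [Finset.mem_erase]; exact ⟨by omega, h⟩
        · right; rw [Finset.mem_erase]; exact ⟨by omega, h⟩
    case hj =>
      intro B' hB'
      rw [mem_lG] at hB'
      obtain ⟨hsub, hg⟩ := hB'
      have hm0 : 0 < m := by
        have h := hsub hg.1
        rw [Finset.mem_range] at h
        omega
      have hmnotB' : m ∉ B' := fun h => by
        have h2 := hsub h; rw [Finset.mem_range] at h2; omega
      rw [Finset.mem_filter, mem_lG]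
      refine ⟨⟨?_, ?_, ?_, ?_⟩, ?_⟩
      · intro b hb
        rw [Finset.mem_insert] at hb
        rcases hb with h | h
        · rw [h, Finset.mem_range]; omega
        · have h2 := hsub h; rw [Finset.mem_range] at h2 ⊢; omega
      · exact Finset.mem_insert_of_mem hg.1
      · rw [show m + 2 - 1 = m + 1 from rfl]
        exact Finset.mem_insert_self _ _
      · intro i hi
        rcases Nat.lt_or_ge (i+1) m with h | h
        · rcases hg.2.2 i h with h' | h'
          · exact Or.inl (Finset.mem_insert_of_mem h')
          · exact Or.inr (Finset.mem_insert_of_mem h')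
        · rcases Nat.eq_or_lt_of_le h with h' | h'
          · left
            apply Finset.mem_insert_of_mem
            have h2 := hg.2.1
            rw [show i = m - 1 by omega]
            exact h2
          · right
            rw [show i + 1 = m + 1 by omega]
            exact Finset.mem_insert_self _ _
      · intro h
        rw [Finset.mem_insert] at h
        rcases h with h | h
        · omega
        · exact hmnotB' h
    case left =>
      intro B hB
      rw [Finset.mem_filter, mem_lG] at hB
      apply Finset.insert_erase
      have h := hB.1.2.2.1
      rwa [show m + 2 - 1 = m + 1 from rfl] at h
    case right =>
      intro B' hB'
      rw [mem_lG] at hB'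
      apply Finset.erase_insert
      intro h
      have h2 := hB'.1 h
      rw [Finset.mem_range] at h2
      omega
    case hw =>
      intro B hB
      rw [Finset.mem_filter, mem_lG] at hB
      obtain ⟨⟨hsub, hg⟩, hm⟩ := hB
      have hm0 : 0 < m := by
        rcases Nat.eq_zero_or_pos m with h | h
        · exact absurd (h ▸ hg.1) hm
        · exact h
      congr 1
      unfold lwt
      rw [show m + 2 - 1 = m + 1 from rfl]
      congr 1
      ext i
      simp only [Finset.mem_filter, Finset.mem_range, Finset.mem_erase]
      constructor
      · rintro ⟨h1, h2, h3⟩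
        have hi_ne : i ≠ m := fun h => hm (h ▸ h2)
        have hi1_ne : i + 1 ≠ m := fun h => hm (h ▸ h3)
        refine ⟨by omega, ⟨by omega, h2⟩, ⟨by omega, h3⟩⟩
      · rintro ⟨h1, ⟨_, h2⟩, ⟨_, h3⟩⟩
        exact ⟨by omega, h2, h3⟩
  rw [claim1, claim2]

lemma Qs_eq_Sseq (k : ℕ) : ∀ m, Qs (k-1) (m+1) = Sseq k m := by
  intro m
  induction m using Nat.strong_induction_on with
  | _ m ih =>
    match m with
    | 0 => exact Qs_one _
    | 1 => exact Qs_two _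
    | (j+2) =>
      rw [show j + 2 + 1 = (j+1) + 2 from rfl, Qs_rec, ih (j+1) (by omega), ih j (by omega)]
      rfl

end LinCount
section Circular

def cgood (n : ℕ) (B : Finset ℕ) : Prop := ∀ i < n, i ∈ B ∨ (i+1) % n ∈ B

def cwt (n : ℕ) (B : Finset ℕ) : ℕ :=
  ((range n).filter (fun i => i ∈ B ∧ (i+1) % n ∈ B)).card

variable {n : ℕ} [NeZero n]

lemma adm_to_cgood (hn : 3 ≤ n) (x : ℕ) :
    (∑ S : Finset (Fin n),
        if Adm S then x ^ (S.filter (fun v => v + ((1:ℕ):Fin n) ∈ S)).card else 0)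
      = ∑ B ∈ (range n).powerset, if cgood n B then x ^ cwt n B else 0 := by
  have hval : ∀ (S : Finset (Fin n)) (v : Fin n), v.val ∈ S.image Fin.val ↔ v ∈ S := by
    intro S v
    rw [Finset.mem_image]
    constructor
    · rintro ⟨w, hw, hwv⟩
      rwa [Fin.val_injective hwv] at hw
    · intro h
      exact ⟨v, h, rfl⟩
  have hsucc : ∀ (v : Fin n), (v + ((1:ℕ):Fin n)).val = (v.val + 1) % n := by
    intro v
    rw [add_cast_val]
  refine Finset.sum_bij' (i := fun (S : Finset (Fin n)) (_ : S ∈ univ) => S.image Fin.val)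
    (j := fun (B : Finset ℕ) (_ : B ∈ (range n).powerset) =>
      univ.filter (fun v : Fin n => v.val ∈ B)) ?hi ?hj ?left ?right ?hw
  case hi =>
    intro S _
    rw [Finset.mem_powerset]
    intro b hb
    rw [Finset.mem_image] at hb
    obtain ⟨v, _, hv⟩ := hb
    rw [Finset.mem_range, ← hv]
    exact v.isLt
  case hj =>
    intro B _
    exact Finset.mem_univ _
  case left =>
    intro S _
    ext v
    rw [Finset.mem_filter]
    constructor
    · rintro ⟨_, h⟩
      exact (hval S v).mp h
    · intro h
      exact ⟨Finset.mem_univ _, (hval S v).mpr h⟩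
  case right =>
    intro B hB
    rw [Finset.mem_powerset] at hB
    ext i
    rw [Finset.mem_image]
    constructor
    · rintro ⟨v, hv, hvi⟩
      rw [Finset.mem_filter] at hv
      rw [← hvi]
      exact hv.2
    · intro h
      have hi : i < n := by
        have := hB h
        rwa [Finset.mem_range] at this
      exact ⟨⟨i, hi⟩, Finset.mem_filter.mpr ⟨Finset.mem_univ _, h⟩, rfl⟩
  case hw =>
    intro S _
    have hAdm_iff : Adm S ↔ cgood n (S.image Fin.val) := by
      constructor
      · intro hS i hi
        rcases hS ⟨i, hi⟩ with h | h
        · exact Or.inl ((hval S ⟨i, hi⟩).mpr h)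
        · right
          have := (hval S _).mpr h
          rwa [hsucc ⟨i, hi⟩] at this
      · intro hg v
        rcases hg v.val v.isLt with h | h
        · exact Or.inl ((hval S v).mp h)
        · right
          rw [← hsucc v] at h
          exact (hval S _).mp h
    have hwt_eq : (S.filter (fun v => v + ((1:ℕ):Fin n) ∈ S)).card
        = cwt n (S.image Fin.val) := by
      unfold cwt
      rw [← Finset.card_image_of_injective
        (S.filter (fun v => v + ((1:ℕ):Fin n) ∈ S)) Fin.val_injective]
      congr 1
      ext i
      rw [Finset.mem_image, Finset.mem_filter, Finset.mem_range]
      constructor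
      · rintro ⟨v, hv, hvi⟩
        rw [Finset.mem_filter] at hv
        subst hvi
        refine ⟨v.isLt, (hval S v).mpr hv.1, ?_⟩
        rw [← hsucc v]
        exact (hval S _).mpr hv.2
      · rintro ⟨hi, h1, h2⟩
        refine ⟨⟨i, hi⟩, Finset.mem_filter.mpr ⟨(hval S ⟨i, hi⟩).mp h1, ?_⟩, rfl⟩
        apply (hval S _).mp
        rwa [hsucc ⟨i, hi⟩]
    rw [hwt_eq]
    by_cases hS : Adm S
    · rw [if_pos hS, if_pos (hAdm_iff.mp hS)]
    · rw [if_neg hS, if_neg (fun h => hS (hAdm_iff.mpr h))]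

end Circular
section CircularSum
variable {n : ℕ} [NeZero n]

lemma cgood_sum (hn : 3 ≤ n) (x : ℕ) :
    (∑ B ∈ (range n).powerset, if cgood n B then x ^ cwt n B else 0)
      = x * Qs x n + 2 * Qs x (n-1) := by
  have hsplit : ∀ B ∈ (range n).powerset,
      (if cgood n B then x ^ cwt n B else 0)
      = (if cgood n B ∧ 0 ∈ B ∧ n-1 ∈ B then x ^ cwt n B else 0)
      + ((if cgood n B ∧ 0 ∈ B ∧ n-1 ∉ B then x ^ cwt n B else 0)
      + (if cgood n B ∧ 0 ∉ B ∧ n-1 ∈ B then x ^ cwt n B else 0)) := by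
    intro B _
    by_cases hg : cgood n B
    · have hor : n-1 ∈ B ∨ 0 ∈ B := by
        rcases hg (n-1) (by omega) with h | h
        · exact Or.inl h
        · rw [show n-1+1 = n by omega, Nat.mod_self] at h
          exact Or.inr h
      by_cases h0 : 0 ∈ B <;> by_cases h1 : n-1 ∈ B <;>
        simp [hg, h0, h1] <;> tauto
    · simp [hg]
  rw [Finset.sum_congr rfl hsplit, Finset.sum_add_distrib, Finset.sum_add_distrib]
  have hT1 : ∑ B ∈ (range n).powerset,
      (if cgood n B ∧ 0 ∈ B ∧ n-1 ∈ B then x ^ cwt n B else 0) = x * Qs x n := by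
    unfold Qs
    rw [Finset.mul_sum]
    apply Finset.sum_congr rfl
    intro B hB
    rw [Finset.mem_powerset] at hB
    have hiff : (cgood n B ∧ 0 ∈ B ∧ n-1 ∈ B) ↔ lgood n B := by
      constructor
      · rintro ⟨hg, h0, h1⟩
        refine ⟨h0, h1, fun i hi => ?_⟩
        rcases hg i (by omega) with h | h
        · exact Or.inl h
        · rw [Nat.mod_eq_of_lt (by omega)] at h
          exact Or.inr h
      · rintro ⟨h0, h1, hgap⟩
        refine ⟨?_, h0, h1⟩
        intro i hi
        rcases Nat.lt_or_ge (i+1) n with h | h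
        · rcases hgap i h with h' | h'
          · exact Or.inl h'
          · rw [Nat.mod_eq_of_lt h]
            exact Or.inr h'
        · left
          rw [show i = n-1 by omega]
          exact h1
    by_cases hl : lgood n B
    · rw [if_pos (hiff.mpr hl), if_pos hl]
      have hcw : cwt n B = lwt n B + 1 := by
        unfold cwt lwt
        have hfe : (range n).filter (fun i => i ∈ B ∧ (i+1) % n ∈ B)
            = insert (n-1) ((range (n-1)).filter (fun i => i ∈ B ∧ i+1 ∈ B)) := by
          ext i
          simp only [Finset.mem_filter, Finset.mem_range, Finset.mem_insert]
          constructor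
          · rintro ⟨hi, hiB, hi1⟩
            rcases Nat.lt_or_ge i (n-1) with h | h
            · right
              rw [Nat.mod_eq_of_lt (by omega)] at hi1
              exact ⟨h, hiB, hi1⟩
            · left; omega
          · rintro (h | ⟨h, hiB, hi1⟩)
            · subst h
              refine ⟨by omega, hl.2.1, ?_⟩
              rw [show n-1+1 = n by omega, Nat.mod_self]
              exact hl.1
            · refine ⟨by omega, hiB, ?_⟩
              rw [Nat.mod_eq_of_lt (by omega)]
              exact hi1
        rw [hfe, Finset.card_insert_of_notMem (by simp)]
      rw [hcw, pow_succ]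
      ring
    · rw [if_neg (fun h => hl (hiff.mp h)), if_neg hl]
      ring
  have hT2 : ∑ B ∈ (range n).powerset,
      (if cgood n B ∧ 0 ∈ B ∧ n-1 ∉ B then x ^ cwt n B else 0) = Qs x (n-1) := by
    have hsub : (range (n-1)).powerset ⊆ (range n).powerset :=
      Finset.powerset_mono.mpr (Finset.range_subset_range.mpr (by omega))
    have hvanish : ∀ B ∈ (range n).powerset, B ∉ (range (n-1)).powerset →
        (if cgood n B ∧ 0 ∈ B ∧ n-1 ∉ B then x ^ cwt n B else 0) = 0 := by
      intro B hB hBn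
      rw [if_neg]
      rintro ⟨hg, h0, h1⟩
      apply hBn
      rw [Finset.mem_powerset] at hB ⊢
      intro b hb
      have hbn := hB hb
      rw [Finset.mem_range] at hbn ⊢
      have : b ≠ n-1 := fun h => h1 (h ▸ hb)
      omega
    rw [← Finset.sum_subset hsub hvanish]
    unfold Qs
    apply Finset.sum_congr rfl
    intro B hB
    rw [Finset.mem_powerset] at hB
    have hn1B : n-1 ∉ B := fun h => by
      have := hB h; rw [Finset.mem_range] at this; omega
    have hiff : (cgood n B ∧ 0 ∈ B ∧ n-1 ∉ B) ↔ lgood (n-1) B := by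
      constructor
      · rintro ⟨hg, h0, h1⟩
        refine ⟨h0, ?_, ?_⟩
        · rcases hg (n-2) (by omega) with h | h
          · rwa [show n-1-1 = n-2 by omega]
          · rw [show n-2+1 = n-1 by omega, Nat.mod_eq_of_lt (by omega)] at h
            exact absurd h h1
        · intro i hi
          rcases hg i (by omega) with h | h
          · exact Or.inl h
          · rw [Nat.mod_eq_of_lt (by omega)] at h
            exact Or.inr h
      · rintro ⟨h0, h1, hgap⟩
        refine ⟨?_, h0, hn1B⟩
        intro i hi
        rcases Nat.lt_trichotomy (i+1) (n-1) with h | h | h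
        · rcases hgap i h with h' | h'
          · exact Or.inl h'
          · rw [Nat.mod_eq_of_lt (by omega)]
            exact Or.inr h'
        · left
          rw [show i = n-1-1 by omega]
          exact h1
        · right
          rw [show i+1 = n by omega, Nat.mod_self]
          exact h0
    have hcw : cwt n B = lwt (n-1) B := by
      unfold cwt lwt
      congr 1
      ext i
      simp only [Finset.mem_filter, Finset.mem_range]
      constructor
      · rintro ⟨hi, hiB, hi1⟩
        have hne1 : i ≠ n-1 := fun h => hn1B (h ▸ hiB)
        have hne2 : i ≠ n-2 := by
          intro h
          rw [h, show n-2+1 = n-1 by omega, Nat.mod_eq_of_lt (by omega)] at hi1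
          exact hn1B hi1
        rw [Nat.mod_eq_of_lt (by omega)] at hi1
        exact ⟨by omega, hiB, hi1⟩
      · rintro ⟨hi, hiB, hi1⟩
        refine ⟨by omega, hiB, ?_⟩
        rw [Nat.mod_eq_of_lt (by omega)]
        exact hi1
    rw [hcw]
    by_cases hl : lgood (n-1) B
    · rw [if_pos (hiff.mpr hl), if_pos hl]
    · rw [if_neg (fun h => hl (hiff.mp h)), if_neg hl]
  have hT3 : ∑ B ∈ (range n).powerset,
      (if cgood n B ∧ 0 ∉ B ∧ n-1 ∈ B then x ^ cwt n B else 0) = Qs x (n-1) := by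
    rw [← Finset.sum_filter]
    have hQ : Qs x (n-1) = ∑ B ∈ (range (n-1)).powerset.filter (lgood (n-1)),
        x ^ lwt (n-1) B := by
      unfold Qs; rw [Finset.sum_filter]
    rw [hQ]
    have hmem1 : ∀ (B : Finset ℕ), 0 ∉ B → ∀ i, (i ∈ B.image (· - 1) ↔ i + 1 ∈ B) := by
      intro B h0 i
      rw [Finset.mem_image]
      constructor
      · rintro ⟨b, hb, hbi⟩
        have hb0 : b ≠ 0 := fun h => h0 (h ▸ hb)
        rwa [show b = i + 1 by omega] at hb
      · intro h
        exact ⟨i+1, h, by omega⟩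
    have hmem2 : ∀ (B' : Finset ℕ) (j : ℕ), (j ∈ B'.image (· + 1) ↔ 1 ≤ j ∧ j - 1 ∈ B') := by
      intro B' j
      rw [Finset.mem_image]
      constructor
      · rintro ⟨b, hb, hbj⟩
        exact ⟨by omega, by rwa [show j - 1 = b by omega]⟩
      · rintro ⟨h1, h2⟩
        exact ⟨j-1, h2, by omega⟩
    refine Finset.sum_bij' (i := fun B _ => B.image (· - 1))
      (j := fun B' _ => B'.image (· + 1)) ?hi ?hj ?left ?right ?hw
    case hi =>
      intro B hB
      rw [Finset.mem_filter, Finset.mem_powerset] at hB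
      obtain ⟨hsub, hg, h0, h1⟩ := hB
      rw [Finset.mem_filter, Finset.mem_powerset]
      refine ⟨?_, ?_, ?_, ?_⟩
      · intro i hi
        rw [hmem1 B h0 i] at hi
        have := hsub hi
        rw [Finset.mem_range] at this ⊢
        omega
      · rw [hmem1 B h0 0]
        rcases hg 0 (by omega) with h | h
        · exact absurd h h0
        · rwa [Nat.mod_eq_of_lt (by omega)] at h
      · rw [hmem1 B h0 (n-1-1), show n-1-1+1 = n-1 by omega]
        exact h1
      · intro i hi
        rw [hmem1 B h0 i, hmem1 B h0 (i+1)]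
        rcases hg (i+1) (by omega) with h | h
        · exact Or.inl h
        · rw [Nat.mod_eq_of_lt (by omega)] at h
          exact Or.inr h
    case hj =>
      intro B' hB'
      rw [Finset.mem_filter, Finset.mem_powerset] at hB'
      obtain ⟨hsub, h0', h1', hgap'⟩ := hB'
      rw [Finset.mem_filter, Finset.mem_powerset]
      have h0im : (0:ℕ) ∉ B'.image (· + 1) := by
        rw [hmem2]
        rintro ⟨h, -⟩
        omega
      have h1im : n-1 ∈ B'.image (· + 1) := by
        rw [hmem2]
        refine ⟨by omega, ?_⟩
        rw [show n-1-1 = n-1-1 from rfl]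
        rwa [show n-1-1 = n-1-1 from rfl]
      refine ⟨?_, ?_, h0im, ?_⟩
      · intro j hj
        rw [hmem2] at hj
        have := hsub hj.2
        rw [Finset.mem_range] at this ⊢
        omega
      · intro i hi
        rcases Nat.eq_zero_or_pos i with h | h
        · right
          rw [h, zero_add, Nat.mod_eq_of_lt (by omega), hmem2]
          exact ⟨le_refl 1, by simpa using h0'⟩
        · rcases Nat.lt_or_ge i (n-1) with h2 | h2
          · rcases hgap' (i-1) (by omega) with h' | h'
            · left
              rw [hmem2]
              exact ⟨by omega, h'⟩
            · right
              rw [Nat.mod_eq_of_lt (by omega), hmem2]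
              refine ⟨by omega, ?_⟩
              rwa [show i+1-1 = i from rfl, show i = (i-1)+1 by omega]
          · left
            have hieq : i = n-1 := by omega
            rw [hieq]
            exact h1im
      · exact h1im
    case left =>
      intro B hB
      rw [Finset.mem_filter, Finset.mem_powerset] at hB
      obtain ⟨hsub, hg, h0, h1⟩ := hB
      show (B.image (fun b => b - 1)).image (fun b => b + 1) = B
      rw [Finset.image_image]
      have he : ∀ b ∈ B, (Function.comp (· + 1) (· - 1)) b = id b := by
        intro b hb
        have : b ≠ 0 := fun h => h0 (h ▸ hb)
        simp only [Function.comp_apply, id_eq]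
        omega
      rw [Finset.image_congr he, Finset.image_id]
    case right =>
      intro B' hB'
      show (B'.image (fun b => b + 1)).image (fun b => b - 1) = B'
      rw [Finset.image_image]
      have he : ∀ b ∈ B', (Function.comp (· - 1) (· + 1)) b = id b := by
        intro b hb
        simp only [Function.comp_apply, id_eq]
        omega
      rw [Finset.image_congr he, Finset.image_id]
    case hw =>
      intro B hB
      rw [Finset.mem_filter, Finset.mem_powerset] at hB
      obtain ⟨hsub, hg, h0, h1⟩ := hB
      congr 1
      unfold cwt lwt
      rw [show ((range n).filter (fun i => i ∈ B ∧ (i+1) % n ∈ B))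
          = ((range (n-1-1)).filter
              (fun j => j ∈ B.image (· - 1) ∧ j+1 ∈ B.image (· - 1))).image (· + 1) from ?_]
      · rw [Finset.card_image_of_injective _ (fun a b h => by omega)]
      · ext i
        rw [hmem2]
        simp only [Finset.mem_filter, Finset.mem_range]
        constructor
        · rintro ⟨hi, hiB, hi1B⟩
          have hne0 : i ≠ 0 := fun h => h0 (h ▸ hiB)
          have hne1 : i ≠ n-1 := by
            intro h
            rw [h, show n-1+1 = n by omega, Nat.mod_self] at hi1B
            exact h0 hi1B
          rw [Nat.mod_eq_of_lt (by omega)] at hi1B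
          refine ⟨by omega, by omega, ?_, ?_⟩
          · rw [hmem1 B h0, show i-1+1 = i by omega]
            exact hiB
          · rw [hmem1 B h0, show i-1+1+1 = i+1 by omega]
            exact hi1B
        · rintro ⟨h1', ⟨hj, hjB, hj1B⟩⟩
          rw [hmem1 B h0] at hjB hj1B
          rw [show i-1+1 = i by omega] at hjB
          rw [show i-1+1+1 = i+1 by omega] at hj1B
          refine ⟨by omega, hjB, ?_⟩
          rw [Nat.mod_eq_of_lt (by omega)]
          exact hj1B
  rw [hT1, hT2, hT3]
  ring

end CircularSum
end CycAux


theorem stmt_1 (n k : ℕ) (hn : 3 ≤ n) (hk : 2 ≤ k) :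
    cycleCount n (GnkMult n k) =
      if Odd n then Sseq k (n - 2) + Sseq k n + 1
      else Sseq k (n - 2) + Sseq k n := by
  haveI : NeZero n := ⟨by omega⟩
  unfold cycleCount
  have hloop : (∑ v : Fin n, GnkMult n k v v) = 0 :=
    Finset.sum_eq_zero (fun v _ => CycAux.G_diag hn v)
  rw [hloop, zero_add, CycAux.cycle_sum hn hk, CycAux.adm_to_cgood hn (k-1),
    CycAux.cgood_sum hn (k-1)]
  have h1 : CycAux.Qs (k-1) n = Sseq k (n-1) := by
    have h := CycAux.Qs_eq_Sseq k (n-1)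
    rwa [show n-1+1 = n by omega] at h
  have h2 : CycAux.Qs (k-1) (n-1) = Sseq k (n-2) := by
    have h := CycAux.Qs_eq_Sseq k (n-2)
    rwa [show n-2+1 = n-1 by omega] at h
  have h3 : Sseq k n = (k-1) * Sseq k (n-1) + Sseq k (n-2) := by
    have he : n = (n-2)+2 := by omega
    conv_lhs => rw [he]
    rw [show Sseq k ((n-2)+2) = (k-1) * Sseq k ((n-2)+1) + Sseq k (n-2) from rfl]
    rw [show (n-2)+1 = n-1 by omega]
  rw [h1, h2]
  by_cases ho : Odd n
  · rw [if_pos ho, if_pos ho, h3]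
    ring
  · rw [if_neg ho, if_neg ho, h3]
    ring
end

section
/- For all integers n ≥ 3 and k ≥ 2, C(G_{n,k}) ≥ C(G'_{n,k}), i.e., the digraph G_{n,k} has at least as many cycles as the digraph G'_{n,k}. -/
open scoped Classical
open Finset

set_option linter.unusedSectionVars false

namespace StmtTwo

open Fin.CommRing

def M (n A B : ℕ) : Fin n → Fin n → ℕ := fun i j =>
  if (j.val + n - i.val) % n = 1 then A
  else if (j.val + n - i.val) % n = 2 then B
  else 0

section FinBasics

variable {n : ℕ} [NeZero n]

lemma sub_val (i j : Fin n) : (j - i).val = (j.val + n - i.val) % n := by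
  rw [Fin.sub_def]
  show (n - ↑i + ↑j) % n = _
  congr 1
  have := i.isLt
  omega

lemma val_ofc {c : ℕ} (hc : c < n) : ((c : Fin n)).val = c := by
  rw [Fin.val_natCast]; exact Nat.mod_eq_of_lt hc

lemma cond_iff {c : ℕ} (hc : c < n) (i j : Fin n) :
    (j.val + n - i.val) % n = c ↔ j = i + (c : Fin n) := by
  rw [← sub_val]
  constructor
  · intro h
    have : j - i = (c : Fin n) := by
      apply Fin.ext; rw [val_ofc hc, h]
    rw [← this]; ring
  · intro h
    subst h
    have : i + (c:Fin n) - i = (c:Fin n) := by ring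
    rw [this, val_ofc hc]

variable (hn : 3 ≤ n)
include hn

lemma val_one'' : (1 : Fin n).val = 1 := by
  have : ((1:ℕ) : Fin n) = (1:Fin n) := by norm_cast
  rw [← this, val_ofc (by omega)]

lemma val_two'' : (2 : Fin n).val = 2 := by
  have : ((2:ℕ) : Fin n) = (2:Fin n) := by norm_cast
  rw [← this, val_ofc (by omega)]

lemma one_ne_zero' : (1 : Fin n) ≠ 0 := by
  intro h; have := congrArg Fin.val h; rw [val_one'' hn] at this; simp at this

lemma two_ne_zero' : (2 : Fin n) ≠ 0 := by
  intro h; have := congrArg Fin.val h; rw [val_two'' hn] at this; simp at this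

lemma two_ne_one' : (2 : Fin n) ≠ 1 := by
  intro h; have := congrArg Fin.val h; rw [val_two'' hn, val_one'' hn] at this; simp at this

lemma M_eq (A B : ℕ) (i j : Fin n) :
    M n A B i j = if j = i + 1 then A else if j = i + 2 then B else 0 := by
  unfold M
  have e1 : ((1:ℕ) : Fin n) = (1 : Fin n) := by norm_cast
  have e2 : ((2:ℕ) : Fin n) = (2 : Fin n) := by norm_cast
  have c1 := cond_iff (by omega : 1 < n) i j
  have c2 := cond_iff (by omega : 2 < n) i j
  rw [e1] at c1; rw [e2] at c2
  by_cases h1 : (↑j + n - ↑i) % n = 1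
  · rw [if_pos h1, if_pos (c1.mp h1)]
  · rw [if_neg h1, if_neg (fun hh => h1 (c1.mpr hh))]
    by_cases h2 : (↑j + n - ↑i) % n = 2
    · rw [if_pos h2, if_pos (c2.mp h2)]
    · rw [if_neg h2, if_neg (fun hh => h2 (c2.mpr hh))]

lemma M_step1 (A B : ℕ) (i : Fin n) : M n A B i (i + 1) = A := by
  rw [M_eq hn]; simp

lemma M_step2 (A B : ℕ) (i : Fin n) : M n A B i (i + 2) = B := by
  rw [M_eq hn, if_neg, if_pos rfl]
  intro h
  exact two_ne_one' hn (add_left_cancel h)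

lemma add_one_ne (i : Fin n) : i + 1 ≠ i := by
  intro h
  exact one_ne_zero' hn (by
    have : i + 1 = i + 0 := by rw [add_zero]; exact h
    exact add_left_cancel this)

lemma add_two_ne (i : Fin n) : i + 2 ≠ i := by
  intro h
  exact two_ne_zero' hn (by
    have : i + 2 = i + 0 := by rw [add_zero]; exact h
    exact add_left_cancel this)

lemma M_self (A B : ℕ) (i : Fin n) : M n A B i i = 0 := by
  rw [M_eq hn, if_neg (fun h => add_one_ne hn i h.symm),
    if_neg (fun h => add_two_ne hn i h.symm)]

lemma M_ne_zero_cases (A B : ℕ) (i j : Fin n) (h : M n A B i j ≠ 0) :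
    j = i + 1 ∨ j = i + 2 := by
  rw [M_eq hn] at h
  by_cases h1 : j = i + 1
  · exact Or.inl h1
  by_cases h2 : j = i + 2
  · exact Or.inr h2
  simp [h1, h2] at h

end FinBasics

section Perms

variable {n : ℕ} [NeZero n]

def Indep (T : Finset (Fin n)) : Prop := ∀ v ∈ T, v + 1 ∉ T

def fT (T : Finset (Fin n)) : Fin n → Fin n := fun v =>
  if v ∈ T then v + 2 else if v - 1 ∈ T then v else v + 1

variable (hn : 3 ≤ n) {T : Finset (Fin n)} (hT : Indep T)
include hn hT

lemma fT_injective : Function.Injective (fT T) := by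
  intro a b h
  unfold fT at h
  by_cases haT : a ∈ T <;> by_cases hbT : b ∈ T
  · rw [if_pos haT, if_pos hbT] at h; exact add_right_cancel h
  · rw [if_pos haT, if_neg hbT] at h
    by_cases hb1 : b - 1 ∈ T
    · rw [if_pos hb1] at h
      exfalso
      have : b - 1 = a + 1 := by rw [← h]; ring
      exact hT a haT (this ▸ hb1)
    · rw [if_neg hb1] at h
      exfalso
      have : b - 1 = a := by
        have : b = a + 1 := by
          have := h
          have h2 : a + 2 = b + 1 := this
          have : a + 1 + 1 = b + 1 := by rw [← h2]; ring
          exact (add_right_cancel this).symm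
        rw [this]; ring
      exact hb1 (this ▸ haT)
  · rw [if_neg haT, if_pos hbT] at h
    by_cases ha1 : a - 1 ∈ T
    · rw [if_pos ha1] at h
      exfalso
      have : a - 1 = b + 1 := by rw [h]; ring
      exact hT b hbT (this ▸ ha1)
    · rw [if_neg ha1] at h
      exfalso
      have : a - 1 = b := by
        have h2 : a + 1 = b + 2 := h
        have : a = b + 1 := by
          have : b + 1 + 1 = a + 1 := by rw [h2]; ring
          exact (add_right_cancel this).symm
        rw [this]; ring
      exact ha1 (this ▸ hbT)
  · rw [if_neg haT, if_neg hbT] at h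
    by_cases ha1 : a - 1 ∈ T <;> by_cases hb1 : b - 1 ∈ T
    · rw [if_pos ha1, if_pos hb1] at h; exact h
    · rw [if_pos ha1, if_neg hb1] at h
      exfalso
      have h3 : a - 1 = b := by rw [h]; ring
      rw [h3] at ha1
      exact hbT ha1
    · rw [if_neg ha1, if_pos hb1] at h
      exfalso
      have h3 : b - 1 = a := by rw [← h]; ring
      rw [h3] at hb1
      exact haT hb1
    · rw [if_neg ha1, if_neg hb1] at h; exact add_right_cancel h

noncomputable def permT : Equiv.Perm (Fin n) :=
  Equiv.ofBijective (fT T) (Finite.injective_iff_bijective.mp (fT_injective hn hT))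

lemma permT_apply (v : Fin n) : permT hn hT v = fT T v := rfl

lemma fT_mem (v : Fin n) (hv : v ∈ T) : fT T v = v + 2 := if_pos hv

lemma fT_eq_self_iff (v : Fin n) : fT T v = v ↔ v - 1 ∈ T := by
  constructor
  · intro h
    unfold fT at h
    by_cases hv : v ∈ T
    · rw [if_pos hv] at h; exact absurd h (add_two_ne hn v)
    · rw [if_neg hv] at h
      by_cases h1 : v - 1 ∈ T
      · exact h1
      · rw [if_neg h1] at h; exact absurd h (add_one_ne hn v)
  · intro h1
    have hv : v ∉ T := by
      intro hv
      have := hT (v - 1) h1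
      rw [sub_add_cancel] at this
      exact this hv
    unfold fT
    rw [if_neg hv, if_pos h1]

lemma fT_eq_add_two_iff (v : Fin n) : fT T v = v + 2 ↔ v ∈ T := by
  constructor
  · intro h
    by_contra hv
    unfold fT at h
    rw [if_neg hv] at h
    by_cases h1 : v - 1 ∈ T
    · rw [if_pos h1] at h; exact add_two_ne hn v h.symm
    · rw [if_neg h1] at h
      exact two_ne_one' hn (add_left_cancel h.symm)
  · exact fT_mem hn hT v

lemma fT_eq_add_one (v : Fin n) (hv : v ∉ T) (h1 : v - 1 ∉ T) : fT T v = v + 1 := by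
  unfold fT; rw [if_neg hv, if_neg h1]

lemma support_permT :
    (permT hn hT).support = univ.filter (fun v => v - 1 ∉ T) := by
  ext v
  simp only [Equiv.Perm.mem_support, mem_filter, mem_univ, true_and, permT_apply]
  rw [← fT_eq_self_iff hn hT]

end Perms

section Perms2

variable {n : ℕ} [NeZero n] (hn : 3 ≤ n) {T : Finset (Fin n)} (hT : Indep T)
include hn hT

lemma exists_moved : ∃ v : Fin n, v - 1 ∉ T := by
  by_contra hc
  push_neg at hc
  have h0 : (0 : Fin n) ∈ T := by
    have := hc 1; rwa [show (1:Fin n) - 1 = 0 by ring] at this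
  have h1 : (1 : Fin n) ∈ T := by
    have := hc 2; rwa [show (2:Fin n) - 1 = 1 by norm_num] at this
  exact hT 0 h0 (by rwa [zero_add])

lemma card_filter_pred : (univ.filter (fun v : Fin n => v - 1 ∈ T)).card = T.card := by
  have he : univ.filter (fun v : Fin n => v - 1 ∈ T) = T.image (· + 1) := by
    ext w
    simp only [mem_filter, mem_univ, true_and, mem_image]
    constructor
    · intro h; exact ⟨w - 1, h, by ring⟩
    · rintro ⟨t, ht, rfl⟩; rwa [show t + 1 - 1 = t by ring]
  rw [he, card_image_of_injective _ (add_left_injective 1)]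

lemma card_support_permT : (permT hn hT).support.card = n - T.card := by
  rw [support_permT hn hT]
  have h1 := Finset.card_filter_add_card_filter_not
    (s := (univ : Finset (Fin n))) (p := fun v : Fin n => v - 1 ∈ T)
  rw [card_filter_pred hn hT, Finset.card_univ, Fintype.card_fin] at h1
  omega

lemma two_card_le : 2 * T.card ≤ n := by
  have hdisj : Disjoint T (T.image (· + 1)) := by
    rw [Finset.disjoint_left]
    rintro a ha hmem
    rw [mem_image] at hmem
    obtain ⟨t, ht, rfl⟩ := hmem
    exact hT t ht ha
  have hu := Finset.card_union_of_disjoint hdisj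
  have hle := Finset.card_le_univ (T ∪ T.image (· + 1))
  rw [hu, card_image_of_injective _ (add_left_injective 1), Fintype.card_fin] at hle
  omega

lemma reach (v₀ : Fin n) (hv₀ : v₀ - 1 ∉ T) :
    ∀ d : ℕ, ∀ w : Fin n, w - 1 ∉ T → w = v₀ + (d : Fin n) →
      ∃ i : ℕ, (fT T)^[i] v₀ = w := by
  intro d
  induction d using Nat.strong_induction_on with
  | _ d IH =>
    intro w hw hwd
    rcases Nat.eq_zero_or_pos d with hd0 | hd1
    · subst hd0
      exact ⟨0, by simpa using hwd.symm⟩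
    · have hw_u : w = (v₀ + ((d - 1 : ℕ) : Fin n)) + 1 := by
        rw [hwd]
        have h1 : ((d - 1 : ℕ) : Fin n) = (d : Fin n) - 1 := by
          rw [Nat.cast_sub hd1, Nat.cast_one]
        rw [h1]; ring
      set u : Fin n := v₀ + ((d - 1 : ℕ) : Fin n) with hu
      by_cases husupp : u - 1 ∈ T
      · rcases Nat.lt_or_ge d 2 with hd2 | hd2
        · exfalso
          have he : u = v₀ := by
            rw [hu, show d - 1 = 0 by omega]; simp
          rw [he] at husupp; exact hv₀ husupp
        · have huu' : v₀ + ((d - 2 : ℕ) : Fin n) = u - 1 := by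
            rw [hu]
            have h2 : ((d - 2:ℕ) : Fin n) = ((d - 1:ℕ) : Fin n) - 1 := by
              rw [show d - 2 = (d-1) - 1 by omega, Nat.cast_sub (by omega : 1 ≤ d - 1),
                Nat.cast_one]
            rw [h2]; ring
          set u' : Fin n := v₀ + ((d - 2 : ℕ) : Fin n) with hu'
          have hu'T : u' ∈ T := by rw [huu']; exact husupp
          have hu'supp : u' - 1 ∉ T := by
            intro hcon
            have h3 := hT (u' - 1) hcon
            rw [sub_add_cancel] at h3
            exact h3 hu'T
          obtain ⟨i, hi⟩ := IH (d - 2) (by omega) u' hu'supp rfl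
          refine ⟨i + 1, ?_⟩
          rw [Function.iterate_succ_apply', hi, fT_mem hn hT u' hu'T, hw_u, huu']
          ring
      · have huT : u ∉ T := by
          intro huT
          apply hw
          rw [hw_u, show u + 1 - 1 = u by ring]
          exact huT
        obtain ⟨i, hi⟩ := IH (d - 1) (by omega) u husupp rfl
        refine ⟨i + 1, ?_⟩
        rw [Function.iterate_succ_apply', hi, fT_eq_add_one hn hT u huT husupp, ← hw_u]

lemma isCycle_permT : (permT hn hT).IsCycle := by
  obtain ⟨v₀, hv₀⟩ := exists_moved hn hT
  refine ⟨v₀, ?_, ?_⟩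
  · rw [permT_apply, Ne, fT_eq_self_iff hn hT]; exact hv₀
  · intro w hw
    have hw' : w - 1 ∉ T := by
      rw [permT_apply, Ne, fT_eq_self_iff hn hT] at hw; exact hw
    obtain ⟨i, hi⟩ := reach hn hT v₀ hv₀ ((w - v₀).val) w hw'
      (by rw [Fin.cast_val_eq_self]; ring)
    refine ⟨(i : ℤ), ?_⟩
    rw [zpow_natCast, Equiv.Perm.coe_pow]
    exact hi

end Perms2

section Rot

variable {n : ℕ} [NeZero n]

def rot2 : Equiv.Perm (Fin n) := Equiv.addRight 2

lemma rot2_apply (v : Fin n) : rot2 v = v + 2 := rfl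

lemma rot2_pow_apply (i : ℕ) (v : Fin n) :
    ((rot2 : Equiv.Perm (Fin n)) ^ i) v = v + ((2 * i : ℕ) : Fin n) := by
  induction i with
  | zero => simp
  | succ i ih =>
    rw [pow_succ', Equiv.Perm.mul_apply, ih, rot2_apply]
    push_cast
    ring

variable (hn : 3 ≤ n)
include hn

lemma rot2_moves (v : Fin n) : rot2 v ≠ v := by
  rw [rot2_apply]; exact add_two_ne hn v

lemma rot2_support : (rot2 : Equiv.Perm (Fin n)).support = univ := by
  ext v
  simp only [Equiv.Perm.mem_support, mem_univ, iff_true]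
  exact rot2_moves hn v

lemma rot2_isCycle_odd (hodd : Odd n) : (rot2 : Equiv.Perm (Fin n)).IsCycle := by
  refine ⟨0, rot2_moves hn 0, fun w hw => ?_⟩
  refine ⟨(((n+1)/2 * w.val : ℕ) : ℤ), ?_⟩
  rw [zpow_natCast, rot2_pow_apply]
  have h2 : 2 * ((n+1)/2 * w.val) = (n+1) * w.val := by
    obtain ⟨m, hm⟩ := hodd
    have he : (n+1)/2 * 2 = n + 1 := by omega
    rw [show 2 * ((n+1)/2 * w.val) = ((n+1)/2 * 2) * w.val by ring, he]
  rw [h2]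
  push_cast
  rw [Fin.natCast_self]
  ring

lemma rot2_not_isCycle_even (heven : ¬ Odd n) : ¬ (rot2 : Equiv.Perm (Fin n)).IsCycle := by
  intro hc
  obtain ⟨i, hi⟩ := hc.exists_pow_eq (rot2_moves hn 0) (rot2_moves hn 1)
  rw [rot2_pow_apply, zero_add] at hi
  have hval : (2 * i) % n = 1 := by
    have := congrArg Fin.val hi
    rw [Fin.val_natCast, val_one'' hn] at this
    exact this
  rw [Nat.not_odd_iff_even] at heven
  have h2 : 2 ∣ n := heven.two_dvd
  have h3 : 2 ∣ (2 * i) % n := (Nat.dvd_mod_iff h2).mpr (dvd_mul_right 2 i)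
  omega

end Rot

def Tof {n : ℕ} [NeZero n] (σ : Equiv.Perm (Fin n)) : Finset (Fin n) :=
  univ.filter (fun v => σ v = v + 2)

section Classify

variable {n : ℕ} [NeZero n] (hn : 3 ≤ n) {σ : Equiv.Perm (Fin n)}

lemma mem_Tof_iff (v : Fin n) : v ∈ Tof σ ↔ σ v = v + 2 := by
  simp [Tof]

include hn

lemma Tof_moved {v : Fin n} (hv : v ∈ Tof σ) : σ v ≠ v := by
  rw [mem_Tof_iff] at hv
  rw [hv]
  exact add_two_ne hn v

variable (hsteps : ∀ v : Fin n, σ v ≠ v → σ v = v + 1 ∨ σ v = v + 2)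
  (hne : σ ≠ rot2)
include hsteps hne

lemma K1 {v : Fin n} (hv : v ∈ Tof σ) : σ (v + 1) = v + 1 := by
  by_contra hmoved
  have claim : ∀ j : ℕ, (v - (j : Fin n)) ∈ Tof σ ∧ σ (v - (j : Fin n) + 1) ≠ v - (j : Fin n) + 1 := by
    intro j
    induction j with
    | zero => simpa using ⟨hv, hmoved⟩
    | succ j ih =>
      obtain ⟨hjT, hj1⟩ := ih
      have hcast : (((j:ℕ) + 1 : ℕ) : Fin n) = (j : Fin n) + 1 := by push_cast; ring
      rw [hcast]
      have key : v - ((j:Fin n) + 1) ∈ Tof σ := by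
        set w : Fin n := v - (j : Fin n) + 1 with hw
        set u : Fin n := σ.symm w with hu2
        have hσu : σ u = w := σ.apply_symm_apply w
        have humoved : σ u ≠ u := by
          intro hfix
          rw [hfix] at hσu
          have : σ w = w := by rw [← hσu]; exact hfix
          exact hj1 this
        rcases hsteps u humoved with h1 | h2
        · exfalso
          have : u = w - 1 := by rw [← hσu, h1]; ring
          have hu_eq : u = v - (j:Fin n) := by rw [this, hw]; ring
          rw [mem_Tof_iff] at hjT
          rw [← hu_eq] at hjT
          rw [h1] at hjT
          have : (1 : Fin n) = 2 := add_left_cancel hjT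
          exact two_ne_one' hn this.symm
        · have : u = w - 2 := by rw [← hσu, h2]; ring
          have hu_eq : u = v - ((j:Fin n) + 1) := by rw [this, hw]; ring
          rw [mem_Tof_iff, ← hu_eq, h2]
      refine ⟨key, ?_⟩
      have : v - ((j:Fin n) + 1) + 1 = v - (j:Fin n) := by ring
      rw [this]
      exact Tof_moved hn hjT
  apply hne
  ext w
  have hwT : w ∈ Tof σ := by
    have := (claim ((v - w).val)).1
    rwa [Fin.cast_val_eq_self, sub_sub_cancel] at this
  rw [mem_Tof_iff] at hwT
  rw [hwT, rot2_apply]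

lemma K2 (hcyc : σ.IsCycle) {v : Fin n} (hfix : σ v = v) : v - 1 ∈ Tof σ := by
  by_contra hvT
  have step1 : σ (v - 1) = v - 1 := by
    by_contra hmoved
    rcases hsteps _ hmoved with h1 | h2
    · rw [sub_add_cancel] at h1
      have hvv : v - 1 = v := σ.injective (h1.trans hfix.symm)
      have h0 : (1 : Fin n) = 0 := by
        have h5 : v - 1 = v - 0 := by rw [sub_zero]; exact hvv
        exact sub_right_injective h5
      exact one_ne_zero' hn h0
    · exact hvT ((mem_Tof_iff (v-1)).mpr h2)
  have claim : ∀ j : ℕ, σ (v - (j:Fin n)) = v - (j:Fin n) ∧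
      σ (v - ((j:Fin n) + 1)) = v - ((j:Fin n) + 1) := by
    intro j
    induction j with
    | zero => simpa using ⟨hfix, step1⟩
    | succ j ih =>
      obtain ⟨h0, h1⟩ := ih
      have hcast : (((j:ℕ) + 1 : ℕ) : Fin n) = (j : Fin n) + 1 := by push_cast; ring
      rw [hcast]
      refine ⟨h1, ?_⟩
      set u : Fin n := v - ((j:Fin n) + 1 + 1) with hu
      by_contra hmoved
      rcases hsteps u hmoved with ha | hb
      · have : u + 1 = v - ((j:Fin n) + 1) := by rw [hu]; ring
        rw [this] at ha
        have := σ.injective (ha.trans h1.symm)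
        rw [hu] at this
        have hab : (j:Fin n) + 1 + 1 = (j:Fin n) + 1 := sub_right_injective this
        have h6 : (j:Fin n) + 1 + 1 = (j:Fin n) + 1 + 0 := by rw [add_zero]; exact hab
        exact one_ne_zero' hn (add_left_cancel h6)
      · have : u + 2 = v - (j:Fin n) := by rw [hu]; ring
        rw [this] at hb
        have := σ.injective (hb.trans h0.symm)
        rw [hu] at this
        have hab : (j:Fin n) + 1 + 1 = (j:Fin n) := sub_right_injective this
        have h6 : (j:Fin n) + 2 = (j:Fin n) + 0 := by
          rw [add_zero, show (j:Fin n) + 2 = (j:Fin n) + 1 + 1 from by ring]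
          exact hab
        exact two_ne_zero' hn (add_left_cancel h6)
  obtain ⟨x, hx, -⟩ := hcyc
  apply hx
  have := (claim ((v - x).val)).1
  rwa [Fin.cast_val_eq_self, sub_sub_cancel] at this

lemma classify (hcyc : σ.IsCycle) :
    Indep (Tof σ) ∧ ∀ v, σ v = fT (Tof σ) v := by
  have hind : Indep (Tof σ) := by
    intro v hv hv1
    exact Tof_moved hn hv1 (K1 hn hsteps hne hv)
  refine ⟨hind, fun v => ?_⟩
  by_cases hvT : v ∈ Tof σ
  · rw [fT_mem hn hind v hvT, (mem_Tof_iff v).mp hvT]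
  · by_cases hv1 : v - 1 ∈ Tof σ
    · have : σ (v - 1 + 1) = v - 1 + 1 := K1 hn hsteps hne hv1
      rw [sub_add_cancel] at this
      rw [this, (fT_eq_self_iff hn hind v).mpr hv1]
    · have hmoved : σ v ≠ v := fun hfix => hv1 (K2 hn hsteps hne hcyc hfix)
      rcases hsteps v hmoved with h1 | h2
      · rw [h1, fT_eq_add_one hn hind v hvT hv1]
      · exact absurd ((mem_Tof_iff v).mpr h2) hvT

end Classify

section Weights

variable {n : ℕ} [NeZero n] (hn : 3 ≤ n) {T : Finset (Fin n)} (hT : Indep T)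
include hn hT

lemma card_moved : (univ.filter (fun v : Fin n => v - 1 ∉ T)).card = n - T.card := by
  have h1 := Finset.card_filter_add_card_filter_not
    (s := (univ : Finset (Fin n))) (p := fun v : Fin n => v - 1 ∈ T)
  rw [card_filter_pred hn hT, Finset.card_univ, Fintype.card_fin] at h1
  omega

lemma prod_permT (A B : ℕ) :
    (∏ v ∈ (permT hn hT).support, M n A B v (permT hn hT v))
      = A ^ (n - 2 * T.card) * B ^ T.card := by
  rw [support_permT hn hT]
  have hsub : T ⊆ univ.filter (fun v => v - 1 ∉ T) := by
    intro v hv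
    simp only [mem_filter, mem_univ, true_and]
    intro h1
    have h2 := hT (v-1) h1
    rw [sub_add_cancel] at h2
    exact h2 hv
  rw [← Finset.prod_sdiff hsub]
  have h1 : ∀ v ∈ (univ.filter (fun v : Fin n => v - 1 ∉ T)) \ T,
      M n A B v (permT hn hT v) = A := by
    intro v hv
    simp only [mem_sdiff, mem_filter, mem_univ, true_and] at hv
    rw [permT_apply, fT_eq_add_one hn hT v hv.2 hv.1, M_step1 hn]
  have h2 : ∀ v ∈ T, M n A B v (permT hn hT v) = B := by
    intro v hv
    rw [permT_apply, fT_mem hn hT v hv, M_step2 hn]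
  rw [Finset.prod_congr rfl h1, Finset.prod_congr rfl h2, Finset.prod_const,
    Finset.prod_const]
  congr 1
  rw [Finset.card_sdiff_of_subset hsub, card_moved hn hT]
  congr 1
  have := two_card_le hn hT
  omega

lemma permT_ne_rot2 : permT hn hT ≠ rot2 := by
  intro he
  have hall : ∀ v : Fin n, v ∈ T := by
    intro v
    rw [← fT_eq_add_two_iff hn hT v, ← permT_apply hn hT v, he, rot2_apply]
  exact hT 0 (hall 0) (by rw [zero_add]; exact hall 1)

lemma Tof_permT : Tof (permT hn hT) = T := by
  ext v
  rw [mem_Tof_iff, permT_apply]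
  exact fT_eq_add_two_iff hn hT v

end Weights

noncomputable def IndF (n : ℕ) [NeZero n] : Finset (Finset (Fin n)) :=
  univ.filter Indep

lemma mem_IndF {n : ℕ} [NeZero n] {T : Finset (Fin n)} : T ∈ IndF n ↔ Indep T := by
  simp [IndF]

section BigSum

variable {n : ℕ} [NeZero n] (hn : 3 ≤ n)
include hn

lemma prod_rot2 (A B : ℕ) :
    (∏ v ∈ (rot2 : Equiv.Perm (Fin n)).support, M n A B v (rot2 v)) = B ^ n := by
  rw [rot2_support hn]
  have h : ∀ v ∈ (univ : Finset (Fin n)), M n A B v (rot2 v) = B := by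
    intro v _
    rw [rot2_apply, M_step2 hn]
  rw [Finset.prod_congr rfl h, Finset.prod_const, Finset.card_univ, Fintype.card_fin]

lemma cycleCount_M (A B : ℕ) (hA : 1 ≤ A) (hB : 1 ≤ B) :
    cycleCount n (M n A B) =
      (∑ T ∈ IndF n, A ^ (n - 2 * T.card) * B ^ T.card) + (if Odd n then B ^ n else 0) := by
  classical
  unfold cycleCount
  have hself : (∑ v : Fin n, M n A B v v) = 0 :=
    Finset.sum_eq_zero (fun v _ => M_self hn A B v)
  rw [hself, zero_add]
  set w : Equiv.Perm (Fin n) → ℕ := fun σ => ∏ v ∈ σ.support, M n A B v (σ v) with hw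
  have e1 : (∑ σ : Equiv.Perm (Fin n), if σ.IsCycle then w σ else 0)
      = ∑ σ ∈ univ.filter Equiv.Perm.IsCycle, w σ := (Finset.sum_filter _ _).symm
  rw [e1]
  set C := (univ.filter Equiv.Perm.IsCycle : Finset (Equiv.Perm (Fin n))) with hC
  have e2 : ∑ σ ∈ C, w σ = ∑ σ ∈ C.filter (fun σ => w σ ≠ 0), w σ :=
    (Finset.sum_filter_ne_zero C).symm
  rw [e2]
  set s' := C.filter (fun σ => w σ ≠ 0) with hs'
  have hmem : ∀ σ, σ ∈ s' ↔ σ.IsCycle ∧ w σ ≠ 0 := by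
    intro σ
    rw [hs', Finset.mem_filter, hC, Finset.mem_filter]
    simp
  have hfact : ∀ σ ∈ s'.erase rot2, Indep (Tof σ) ∧ ∀ v, σ v = fT (Tof σ) v := by
    intro σ hσ
    rw [Finset.mem_erase] at hσ
    obtain ⟨hrot, hσ'⟩ := hσ
    obtain ⟨hcyc, hwne⟩ := (hmem σ).mp hσ'
    have hsteps : ∀ v : Fin n, σ v ≠ v → σ v = v + 1 ∨ σ v = v + 2 := by
      intro v hv
      have hvs : v ∈ σ.support := Equiv.Perm.mem_support.mpr hv
      have := Finset.prod_ne_zero_iff.mp hwne v hvs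
      exact M_ne_zero_cases hn A B v (σ v) this
    exact classify hn hsteps hrot hcyc
  have hmain : ∑ σ ∈ s'.erase rot2, w σ
      = ∑ T ∈ IndF n, A ^ (n - 2 * T.card) * B ^ T.card := by
    refine Finset.sum_bij' (fun σ _ => Tof σ)
      (fun T hT => permT hn (mem_IndF.mp hT)) ?_ ?_ ?_ ?_ ?_
    · intro σ hσ
      exact mem_IndF.mpr (hfact σ hσ).1
    · intro T hT
      rw [Finset.mem_erase]
      refine ⟨permT_ne_rot2 hn (mem_IndF.mp hT), (hmem _).mpr ⟨isCycle_permT hn _, ?_⟩⟩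
      rw [hw]
      simp only []
      rw [prod_permT hn (mem_IndF.mp hT)]
      exact Nat.mul_ne_zero (pow_ne_zero _ (by omega)) (pow_ne_zero _ (by omega))
    · intro σ hσ
      exact (Equiv.ext fun v => ((hfact σ hσ).2 v).symm)
    · intro T hT
      exact Tof_permT hn (mem_IndF.mp hT)
    · intro σ hσ
      have hσeq : σ = permT hn (hfact σ hσ).1 := Equiv.ext fun v => (hfact σ hσ).2 v
      calc w σ = w (permT hn (hfact σ hσ).1) := by rw [← hσeq]
        _ = A ^ (n - 2 * (Tof σ).card) * B ^ (Tof σ).card := by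
            rw [hw]
            simp only []
            rw [prod_permT hn (hfact σ hσ).1]
  by_cases hodd : Odd n
  · have hrotmem : rot2 ∈ s' := by
      rw [hmem]
      refine ⟨rot2_isCycle_odd hn hodd, ?_⟩
      rw [hw]
      simp only []
      rw [prod_rot2 hn A B]
      exact pow_ne_zero _ (by omega)
    have e3 := Finset.sum_erase_add s' w hrotmem
    rw [← e3, hmain, if_pos hodd]
    congr 1
    rw [hw]
    simp only []
    rw [prod_rot2 hn A B]
  · have hrotnot : rot2 ∉ s' := by
      rw [hmem]
      rintro ⟨hcyc, -⟩
      exact rot2_not_isCycle_even hn hodd hcyc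
    rw [Finset.erase_eq_of_notMem hrotnot] at hmain
    rw [hmain, if_neg hodd, add_zero]

end BigSum

section NatSide

def PIndF (m : ℕ) : Finset (Finset ℕ) :=
  (Finset.range m).powerset.filter (fun T => ∀ i ∈ T, i + 1 ∉ T)

def gseq (α β : ℕ) : ℕ → ℕ
  | 0 => α
  | 1 => α * α + β
  | (m+2) => α * gseq α β (m+1) + β * gseq α β m

lemma mem_PIndF {m : ℕ} {T : Finset ℕ} :
    T ∈ PIndF m ↔ T ⊆ Finset.range m ∧ ∀ i ∈ T, i + 1 ∉ T := by
  simp [PIndF]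

lemma PIndF_card_bound {m : ℕ} {T : Finset ℕ} (h : T ∈ PIndF m) :
    2 * T.card ≤ m + 1 := by
  obtain ⟨hsub, hind⟩ := mem_PIndF.mp h
  have hdisj : Disjoint T (T.image (· + 1)) := by
    rw [Finset.disjoint_left]
    rintro a ha hmem
    rw [Finset.mem_image] at hmem
    obtain ⟨t, ht, rfl⟩ := hmem
    exact hind t ht ha
  have hsub2 : T ∪ T.image (· + 1) ⊆ Finset.range (m+1) := by
    apply Finset.union_subset
    · exact hsub.trans (Finset.range_subset_range.mpr (Nat.le_succ m))
    · intro a ha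
      rw [Finset.mem_image] at ha
      obtain ⟨t, ht, rfl⟩ := ha
      have := hsub ht
      rw [Finset.mem_range] at this ⊢
      omega
  have hc := Finset.card_le_card hsub2
  rw [Finset.card_union_of_disjoint hdisj,
    card_image_of_injective _ (add_left_injective 1), Finset.card_range] at hc
  omega

lemma sum_PIndF (α β : ℕ) (m : ℕ) :
    ∑ T ∈ PIndF m, α ^ (m + 1 - 2 * T.card) * β ^ T.card = gseq α β m := by
  induction m using Nat.twoStepInduction with
  | zero =>
    have h0 : PIndF 0 = {∅} := by decide
    rw [h0, Finset.sum_singleton]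
    simp [gseq]
  | one =>
    have h1 : PIndF 1 = {∅, {0}} := by decide
    rw [h1]
    rw [Finset.sum_insert (by decide), Finset.sum_singleton]
    simp [gseq]
    ring
  | more m ih ih1 =>
    rw [← Finset.sum_filter_add_sum_filter_not (PIndF (m+2)) (fun T => (m+1) ∈ T)]
    have hnotmem : (PIndF (m+2)).filter (fun T => ¬ (m+1) ∈ T) = PIndF (m+1) := by
      ext T
      simp only [Finset.mem_filter, mem_PIndF]
      constructor
      · rintro ⟨⟨hsub, hind⟩, hnm⟩
        refine ⟨?_, hind⟩
        intro a ha
        have := hsub ha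
        rw [Finset.mem_range] at this ⊢
        rcases Nat.lt_or_ge a (m+1) with h | h
        · exact h
        · exfalso; have : a = m + 1 := by omega
          rw [this] at ha; exact hnm ha
      · rintro ⟨hsub, hind⟩
        refine ⟨⟨hsub.trans (Finset.range_subset_range.mpr (by omega)), hind⟩, ?_⟩
        intro hmem
        have := hsub hmem
        rw [Finset.mem_range] at this
        omega
    have hpart2 : ∑ T ∈ (PIndF (m+2)).filter (fun T => ¬ (m+1) ∈ T),
        α ^ (m + 3 - 2 * T.card) * β ^ T.card = α * gseq α β (m+1) := by
      rw [hnotmem, ← ih1, Finset.mul_sum]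
      apply Finset.sum_congr rfl
      intro T hT
      have hb := PIndF_card_bound hT
      rw [show m + 3 - 2 * T.card = (m + 2 - 2 * T.card) + 1 by omega, pow_succ]
      ring
    have hpart1 : ∑ T ∈ (PIndF (m+2)).filter (fun T => (m+1) ∈ T),
        α ^ (m + 3 - 2 * T.card) * β ^ T.card = β * gseq α β m := by
      rw [← ih, Finset.mul_sum]
      refine Finset.sum_bij' (fun T _ => T.erase (m+1))
        (fun T _ => insert (m+1) T) ?_ ?_ ?_ ?_ ?_
      · intro T hT
        rw [Finset.mem_filter, mem_PIndF] at hT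
        obtain ⟨⟨hsub, hind⟩, hmem⟩ := hT
        rw [mem_PIndF]
        constructor
        · intro a ha
          rw [Finset.mem_erase] at ha
          obtain ⟨hne, ha⟩ := ha
          have h1 := hsub ha
          rw [Finset.mem_range] at h1 ⊢
          have hma : a ≠ m := by
            intro he
            rw [he] at ha
            exact hind m ha hmem
          omega
        · intro i hi
          rw [Finset.mem_erase] at hi
          intro hcon
          rw [Finset.mem_erase] at hcon
          exact hind i hi.2 hcon.2
      · intro T hT
        rw [mem_PIndF] at hT
        obtain ⟨hsub, hind⟩ := hT
        rw [Finset.mem_filter, mem_PIndF]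
        refine ⟨⟨?_, ?_⟩, Finset.mem_insert_self _ _⟩
        · intro a ha
          rw [Finset.mem_insert] at ha
          rw [Finset.mem_range]
          rcases ha with rfl | ha
          · omega
          · have := hsub ha; rw [Finset.mem_range] at this; omega
        · intro i hi
          rw [Finset.mem_insert] at hi
          intro hcon
          rw [Finset.mem_insert] at hcon
          rcases hi with rfl | hi
          · rcases hcon with h | h
            · omega
            · have := hsub h; rw [Finset.mem_range] at this; omega
          · rcases hcon with h | h
            · have := hsub hi; rw [Finset.mem_range] at this; omega
            · exact hind i hi h
      · intro T hT
        rw [Finset.mem_filter] at hT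
        exact Finset.insert_erase hT.2
      · intro T hT
        rw [mem_PIndF] at hT
        apply Finset.erase_insert
        intro hcon
        have := hT.1 hcon
        rw [Finset.mem_range] at this
        omega
      · intro T hT
        rw [Finset.mem_filter, mem_PIndF] at hT
        obtain ⟨⟨hsub, hind⟩, hmem⟩ := hT
        have hcard : (T.erase (m+1)).card = T.card - 1 := Finset.card_erase_of_mem hmem
        have hpos : 1 ≤ T.card := Finset.card_pos.mpr ⟨m+1, hmem⟩
        rw [hcard]
        set c := T.card - 1 with hc
        have hTc : T.card = c + 1 := by omega
        rw [hTc, show m + 3 - 2 * (c+1) = m + 1 - 2 * c by omega, pow_succ]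
        ring
    rw [hpart1, hpart2, gseq]
    ring

end NatSide

section Transport

variable {n : ℕ} [NeZero n]

def lastF (n : ℕ) [NeZero n] : Fin n :=
  ⟨n - 1, Nat.sub_lt (Nat.pos_of_ne_zero (NeZero.ne n)) one_pos⟩

variable (hn : 3 ≤ n)
include hn

lemma val_add_one_of_lt {v : Fin n} (h : v.val + 1 < n) : (v + 1).val = v.val + 1 := by
  rw [Fin.add_def]
  show (v.val + (1 : Fin n).val) % n = v.val + 1
  rw [val_one'' hn]
  exact Nat.mod_eq_of_lt h

lemma lastF_add_one : (lastF n) + 1 = 0 := by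
  apply Fin.ext
  rw [Fin.add_def]
  show ((lastF n).val + (1 : Fin n).val) % n = (0 : Fin n).val
  rw [val_one'' hn]
  show (n - 1 + 1) % n = 0
  rw [show n - 1 + 1 = n by omega, Nat.mod_self]

lemma sum_IndF (α β : ℕ) :
    ∑ T ∈ IndF n, α ^ (n - 2 * T.card) * β ^ T.card
      = gseq α β (n-1) + β * gseq α β (n-3) := by
  classical
  rw [← Finset.sum_filter_add_sum_filter_not (IndF n) (fun T => lastF n ∈ T)]
  have hsumA := sum_PIndF α β (n-1)
  rw [show n - 1 + 1 = n by omega] at hsumA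
  have hsumB := sum_PIndF α β (n-3)
  rw [show n - 3 + 1 = n - 2 by omega] at hsumB
  have hA : ∑ T ∈ (IndF n).filter (fun T => ¬ lastF n ∈ T),
      α ^ (n - 2 * T.card) * β ^ T.card = gseq α β (n-1) := by
    rw [← hsumA]
    refine Finset.sum_bij' (fun T _ => T.image Fin.val)
      (fun T' _ => T'.image (fun i : ℕ => (i : Fin n))) ?_ ?_ ?_ ?_ ?_
    · intro T hT
      rw [Finset.mem_filter, mem_IndF] at hT
      obtain ⟨hind, hlast⟩ := hT
      rw [mem_PIndF]
      constructor
      · intro a ha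
        rw [Finset.mem_image] at ha
        obtain ⟨v, hv, rfl⟩ := ha
        rw [Finset.mem_range]
        have h1 := v.isLt
        have h2 : v.val ≠ n - 1 := by
          intro he
          apply hlast
          have : v = lastF n := Fin.ext he
          rwa [← this]
        omega
      · intro i hi hcon
        rw [Finset.mem_image] at hi hcon
        obtain ⟨t, ht, rfl⟩ := hi
        obtain ⟨u, hu, huval⟩ := hcon
        have hu1 : u = t + 1 := by
          apply Fin.ext
          rw [val_add_one_of_lt hn (by rw [← huval]; exact u.isLt), huval]
        rw [hu1] at hu
        exact hind t ht hu
    · intro T' hT'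
      rw [mem_PIndF] at hT'
      obtain ⟨hsub, hind⟩ := hT'
      rw [Finset.mem_filter, mem_IndF]
      have hvals : ∀ i ∈ T', i < n - 1 := by
        intro i hi
        have := hsub hi
        rwa [Finset.mem_range] at this
      constructor
      · intro v hv hcon
        rw [Finset.mem_image] at hv hcon
        obtain ⟨i, hi, rfl⟩ := hv
        obtain ⟨i', hi', h'⟩ := hcon
        have hilt := hvals i hi
        have hi'lt := hvals i' hi'
        have hval : ((i : Fin n)).val = i := val_ofc (by omega)
        have hval' : ((i' : Fin n)).val = i' := val_ofc (by omega)
        have : i' = i + 1 := by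
          have := congrArg Fin.val h'
          rw [hval', val_add_one_of_lt hn (by rw [hval]; omega), hval] at this
          exact this
        rw [this] at hi'
        exact hind i hi hi'
      · intro hcon
        rw [Finset.mem_image] at hcon
        obtain ⟨i, hi, h'⟩ := hcon
        have hilt := hvals i hi
        have := congrArg Fin.val h'
        rw [val_ofc (by omega : i < n)] at this
        have h3 : (lastF n).val = n - 1 := rfl
        rw [h3] at this
        omega
    · intro T hT
      ext v
      simp only [Finset.mem_image]
      constructor
      · rintro ⟨i, ⟨u, hu, rfl⟩, rfl⟩
        rwa [Fin.cast_val_eq_self]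
      · intro hv
        exact ⟨v.val, ⟨v, hv, rfl⟩, Fin.cast_val_eq_self v⟩
    · intro T' hT'
      rw [mem_PIndF] at hT'
      ext i
      simp only [Finset.mem_image]
      constructor
      · rintro ⟨v, ⟨i', hi', rfl⟩, rfl⟩
        have := hT'.1 hi'
        rw [Finset.mem_range] at this
        rwa [val_ofc (by omega : i' < n)]
      · intro hi
        have := hT'.1 hi
        rw [Finset.mem_range] at this
        exact ⟨(i : Fin n), ⟨i, hi, rfl⟩, val_ofc (by omega : i < n)⟩
    · intro T hT
      rw [Finset.card_image_of_injective _ Fin.val_injective]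
  have hB : ∑ T ∈ (IndF n).filter (fun T => lastF n ∈ T),
      α ^ (n - 2 * T.card) * β ^ T.card = β * gseq α β (n-3) := by
    rw [← hsumB, Finset.mul_sum]
    refine Finset.sum_bij' (fun T _ => (T.erase (lastF n)).image (fun v => v.val - 1))
      (fun T' _ => insert (lastF n) (T'.image (fun i : ℕ => ((i + 1 : ℕ) : Fin n)))) ?_ ?_ ?_ ?_ ?_
    · intro T hT
      rw [Finset.mem_filter, mem_IndF] at hT
      obtain ⟨hind, hlast⟩ := hT
      have h0 : (0 : Fin n) ∉ T := by
        have := hind (lastF n) hlast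
        rwa [lastF_add_one hn] at this
      have hbound : ∀ v ∈ T.erase (lastF n), 1 ≤ v.val ∧ v.val ≤ n - 3 := by
        intro v hv
        rw [Finset.mem_erase] at hv
        obtain ⟨hne, hvT⟩ := hv
        have h1 := v.isLt
        have h2 : v.val ≠ n - 1 := fun he => hne (Fin.ext he)
        have h3 : v.val ≠ 0 := by
          intro he
          apply h0
          have : v = 0 := Fin.ext he
          rwa [← this]
        have h4 : v.val ≠ n - 2 := by
          intro he
          apply hind v hvT
          have : v + 1 = lastF n := by
            apply Fin.ext
            rw [val_add_one_of_lt hn (by omega)]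
            show v.val + 1 = n - 1
            omega
          rwa [this]
        omega
      rw [mem_PIndF]
      constructor
      · intro a ha
        rw [Finset.mem_image] at ha
        obtain ⟨v, hv, rfl⟩ := ha
        have := hbound v hv
        rw [Finset.mem_range]
        omega
      · intro i hi hcon
        rw [Finset.mem_image] at hi hcon
        obtain ⟨t, ht, rfl⟩ := hi
        obtain ⟨u, hu, huval⟩ := hcon
        have hbt := hbound t ht
        have hbu := hbound u hu
        have hu1 : u = t + 1 := by
          apply Fin.ext
          rw [val_add_one_of_lt hn (by have := u.isLt; omega)]
          omega
        rw [Finset.mem_erase] at ht hu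
        rw [hu1] at hu
        exact hind t ht.2 hu.2
    · intro T' hT'
      rw [mem_PIndF] at hT'
      obtain ⟨hsub, hind⟩ := hT'
      have hvals : ∀ i ∈ T', i < n - 3 := by
        intro i hi
        have := hsub hi
        rwa [Finset.mem_range] at this
      have hvalcast : ∀ i ∈ T', (((i+1 : ℕ) : Fin n)).val = i + 1 := by
        intro i hi
        have := hvals i hi
        exact val_ofc (by omega)
      have hlastnot : lastF n ∉ T'.image (fun i : ℕ => ((i + 1 : ℕ) : Fin n)) := by
        intro hcon
        rw [Finset.mem_image] at hcon
        obtain ⟨i, hi, h'⟩ := hcon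
        have := congrArg Fin.val h'
        rw [hvalcast i hi] at this
        have h2 : i + 1 = n - 1 := this
        have := hvals i hi
        omega
      rw [Finset.mem_filter, mem_IndF]
      refine ⟨?_, Finset.mem_insert_self _ _⟩
      intro v hv hcon
      rw [Finset.mem_insert] at hv hcon
      rcases hv with rfl | hv
      · rw [lastF_add_one hn] at hcon
        rcases hcon with h | h
        · have := congrArg Fin.val h
          show False
          have h2 : (0:Fin n).val = 0 := rfl
          rw [h2] at this
          show False
          have h3 : (lastF n).val = n - 1 := rfl
          rw [h3] at this
          omega
        · rw [Finset.mem_image] at h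
          obtain ⟨i, hi, h'⟩ := h
          have := congrArg Fin.val h'
          rw [hvalcast i hi] at this
          have h2 : i + 1 = (0 : Fin n).val := this
          have h3 : (0:Fin n).val = 0 := rfl
          omega
      · rw [Finset.mem_image] at hv
        obtain ⟨i, hi, rfl⟩ := hv
        have hival := hvalcast i hi
        have hilt := hvals i hi
        rcases hcon with h | h
        · have := congrArg Fin.val h
          rw [val_add_one_of_lt hn (by rw [hival]; omega), hival] at this
          have h3 : (lastF n).val = n - 1 := rfl
          rw [h3] at this
          omega
        · rw [Finset.mem_image] at h
          obtain ⟨i', hi', h'⟩ := h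
          have := congrArg Fin.val h'
          rw [hvalcast i' hi', val_add_one_of_lt hn (by rw [hival]; omega), hival] at this
          have : i' = i + 1 := by omega
          rw [this] at hi'
          exact hind i hi hi'
    · intro T hT
      rw [Finset.mem_filter, mem_IndF] at hT
      obtain ⟨hind, hlast⟩ := hT
      have h0 : (0 : Fin n) ∉ T := by
        have := hind (lastF n) hlast
        rwa [lastF_add_one hn] at this
      have hbound : ∀ v ∈ T.erase (lastF n), 1 ≤ v.val ∧ v.val ≤ n - 3 := by
        intro v hv
        rw [Finset.mem_erase] at hv
        obtain ⟨hne, hvT⟩ := hv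
        have h1 := v.isLt
        have h2 : v.val ≠ n - 1 := fun he => hne (Fin.ext he)
        have h3 : v.val ≠ 0 := by
          intro he
          apply h0
          have : v = 0 := Fin.ext he
          rwa [← this]
        have h4 : v.val ≠ n - 2 := by
          intro he
          apply hind v hvT
          have : v + 1 = lastF n := by
            apply Fin.ext
            rw [val_add_one_of_lt hn (by omega)]
            show v.val + 1 = n - 1
            omega
          rwa [this]
        omega
      have himg : ((T.erase (lastF n)).image (fun v => v.val - 1)).image
          (fun i : ℕ => ((i + 1 : ℕ) : Fin n)) = T.erase (lastF n) := by
        ext v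
        simp only [Finset.mem_image]
        constructor
        · rintro ⟨i, ⟨u, hu, rfl⟩, rfl⟩
          have := hbound u hu
          rw [show u.val - 1 + 1 = u.val by omega, Fin.cast_val_eq_self]
          exact hu
        · intro hv
          have := hbound v hv
          exact ⟨v.val - 1, ⟨v, hv, rfl⟩, by
            rw [show v.val - 1 + 1 = v.val by omega, Fin.cast_val_eq_self]⟩
      show insert (lastF n) (((T.erase (lastF n)).image (fun v => v.val - 1)).image
        (fun i : ℕ => ((i + 1 : ℕ) : Fin n))) = T
      rw [himg, Finset.insert_erase hlast]
    · intro T' hT'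
      rw [mem_PIndF] at hT'
      obtain ⟨hsub, hind⟩ := hT'
      have hvals : ∀ i ∈ T', i < n - 3 := by
        intro i hi
        have := hsub hi
        rwa [Finset.mem_range] at this
      have hlastnot : lastF n ∉ T'.image (fun i : ℕ => ((i + 1 : ℕ) : Fin n)) := by
        intro hcon
        rw [Finset.mem_image] at hcon
        obtain ⟨i, hi, h'⟩ := hcon
        have := congrArg Fin.val h'
        rw [val_ofc (by have := hvals i hi; omega : i + 1 < n)] at this
        have h2 : i + 1 = n - 1 := this
        have := hvals i hi
        omega
      show ((insert (lastF n) (T'.image (fun i : ℕ => ((i + 1 : ℕ) : Fin n)))).erase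
        (lastF n)).image (fun v => v.val - 1) = T'
      rw [Finset.erase_insert hlastnot]
      ext i
      simp only [Finset.mem_image]
      constructor
      · rintro ⟨v, ⟨i', hi', rfl⟩, rfl⟩
        have := hvals i' hi'
        rwa [val_ofc (by omega : i' + 1 < n), Nat.add_sub_cancel]
      · intro hi
        have := hvals i hi
        exact ⟨((i + 1 : ℕ) : Fin n), ⟨i, hi, rfl⟩, by
          rw [val_ofc (by omega : i + 1 < n), Nat.add_sub_cancel]⟩
    · intro T hT
      rw [Finset.mem_filter, mem_IndF] at hT
      obtain ⟨hind, hlast⟩ := hT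
      have h0 : (0 : Fin n) ∉ T := by
        have := hind (lastF n) hlast
        rwa [lastF_add_one hn] at this
      have hbound : ∀ v ∈ T.erase (lastF n), 1 ≤ v.val ∧ v.val ≤ n - 3 := by
        intro v hv
        rw [Finset.mem_erase] at hv
        obtain ⟨hne, hvT⟩ := hv
        have h1 := v.isLt
        have h2 : v.val ≠ n - 1 := fun he => hne (Fin.ext he)
        have h3 : v.val ≠ 0 := by
          intro he
          apply h0
          have : v = 0 := Fin.ext he
          rwa [← this]
        have h4 : v.val ≠ n - 2 := by
          intro he
          apply hind v hvT
          have : v + 1 = lastF n := by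
            apply Fin.ext
            rw [val_add_one_of_lt hn (by omega)]
            show v.val + 1 = n - 1
            omega
          rwa [this]
        omega
      have hcard : ((T.erase (lastF n)).image (fun v => v.val - 1)).card = T.card - 1 := by
        rw [Finset.card_image_of_injOn, Finset.card_erase_of_mem hlast]
        intro u hu v hv he
        have hbu := hbound u (Finset.mem_coe.mp hu)
        have hbv := hbound v (Finset.mem_coe.mp hv)
        apply Fin.ext
        simp only at he
        omega
      have hpos : 1 ≤ T.card := Finset.card_pos.mpr ⟨lastF n, hlast⟩
      rw [hcard]
      set c := T.card - 1 with hc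
      have hTc : T.card = c + 1 := by omega
      rw [hTc, show n - 2 * (c + 1) = n - 2 - 2 * c by omega, pow_succ]
      ring
  rw [hA, hB]
  ring

end Transport

section Final

lemma gseq_rec (a b j : ℕ) : gseq a b (j+2) = a * gseq a b (j+1) + b * gseq a b j := rfl

lemma gseq_one_mono (x : ℕ) : ∀ j, gseq 1 x j ≤ gseq 1 x (j+1) := by
  intro j
  cases j with
  | zero => show gseq 1 x 0 ≤ gseq 1 x 1
            show (1:ℕ) ≤ 1 * 1 + x
            omega
  | succ j =>
    rw [gseq_rec, one_mul]
    exact Nat.le_add_right _ _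

lemma key (x : ℕ) (hx : 1 ≤ x) : ∀ m, gseq 1 x (m+2) + x * gseq 1 x m + x^(m+3)
    ≤ gseq x 1 (m+2) + gseq x 1 m + 1 := by
  intro m
  induction m using Nat.twoStepInduction with
  | zero =>
    show gseq 1 x 2 + x * gseq 1 x 0 + x^3 ≤ gseq x 1 2 + gseq x 1 0 + 1
    rw [gseq_rec 1 x 0, gseq_rec x 1 0]
    show 1 * (1 * 1 + x) + x * 1 + x * 1 + x^3 ≤ x * (x * x + 1) + 1 * x + x + 1
    ring_nf
    nlinarith []
  | one =>
    show gseq 1 x 3 + x * gseq 1 x 1 + x^4 ≤ gseq x 1 3 + gseq x 1 1 + 1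
    rw [gseq_rec 1 x 1, gseq_rec x 1 1]
    show 1 * (1 * (1 * 1 + x) + x * 1) + x * (1 * 1 + x) + x * (1 * 1 + x) + x^4
      ≤ x * (x * (x * x + 1) + 1 * x) + 1 * (x * x + 1) + (x * x + 1) + 1
    nlinarith [sq_nonneg (x - 1), Nat.one_le_iff_ne_zero.mp hx]
  | more m ih ih1 =>
    have hmono : gseq 1 x (m+2) + x * gseq 1 x m ≤ gseq 1 x (m+3) + x * gseq 1 x (m+1) :=
      Nat.add_le_add (gseq_one_mono x (m+2)) (Nat.mul_le_mul_left x (gseq_one_mono x m))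
    have hxp : x ≤ x ^ (m+3) := by
      calc x = x ^ 1 := (pow_one x).symm
        _ ≤ x ^ (m+3) := Nat.pow_le_pow_right (by omega) (by omega)
    have hp4 : x^(m+4) = x * x^(m+3) := by ring
    have hp5 : x^(m+1+1+3) = x * x^(m+4) := by ring
    rw [show m+2+2 = m+4 from rfl, show m+1+2 = m+3 from rfl] at *
    rw [gseq_rec 1 x (m+2), gseq_rec x 1 (m+2)]
    set q3 := gseq 1 x (m+3)
    set q2 := gseq 1 x (m+2)
    set q1 := gseq 1 x (m+1)
    set q0 := gseq 1 x m
    set p3 := gseq x 1 (m+3)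
    set p2 := gseq x 1 (m+2)
    set p1 := gseq x 1 (m+1)
    set p0 := gseq x 1 m
    -- goal : 1 * q3 + x * q2 + x * q2 + x^(m+1+1+3) ≤ x * p3 + 1 * p2 + p2 + 1
    rw [hp5, hp4]
    have hih1x : x * (q3 + x * q1 + x^(m+4)) ≤ x * (p3 + p1 + 1) :=
      Nat.mul_le_mul_left x ih1
    have q2eq : q2 = 1 * q1 + x * q0 := gseq_rec 1 x m
    have p2eq : p2 = x * p1 + 1 * p0 := gseq_rec x 1 m
    have hprod : x * (q2 + x * q0) + (q3 + x * q1) ≤ x * (q3 + x * q1) + (q2 + x * q0) := by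
      obtain ⟨c, hc⟩ := Nat.exists_eq_add_of_le hmono
      rw [hc]
      have hxc : c ≤ x * c := Nat.le_mul_of_pos_left c (by omega)
      have expand : x * (q2 + x * q0 + c) = x * (q2 + x * q0) + x * c := by ring
      rw [expand]
      omega
    nlinarith [hih1x, ih, hprod, hxp, q2eq, p2eq]

end Final

end StmtTwo

theorem stmt_2 (n k : ℕ) (hn : 3 ≤ n) (hk : 2 ≤ k) :
    cycleCount n (Gnk'Mult n k) ≤ cycleCount n (GnkMult n k) := by
  haveI : NeZero n := ⟨by omega⟩
  have hG : GnkMult n k = StmtTwo.M n (k-1) 1 := rfl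
  have hG' : Gnk'Mult n k = StmtTwo.M n 1 (k-1) := rfl
  rw [hG, hG', StmtTwo.cycleCount_M hn (k-1) 1 (by omega) le_rfl,
    StmtTwo.cycleCount_M hn 1 (k-1) le_rfl (by omega),
    StmtTwo.sum_IndF hn 1 (k-1), StmtTwo.sum_IndF hn (k-1) 1]
  set x := k - 1 with hx
  have hkey := StmtTwo.key x (by omega) (n-3)
  rw [show n - 3 + 2 = n - 1 by omega, show n - 3 + 3 = n by omega] at hkey
  have hxpow : 1 ≤ x ^ n := Nat.one_le_pow _ _ (by omega)
  by_cases hodd : Odd n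
  · rw [if_pos hodd, if_pos hodd, one_pow]
    omega
  · rw [if_neg hodd, if_neg hodd]
    omega
end
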